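/- arXiv:1012.2326 — 8 statements merged into one kernel-verified Lean document; each statement's English description precedes it below -/
import Mathlib

section
/- Let (g_j)_{j∈ℤ} be a ℤ-grading of g = q(N) such that the central element (I_N, 0) lies in g₀. Then the odd element C = (0, I_N) also lies in g₀. -/
/-! The grading integrates to the automorphisms `φ_t` (`t ≠ 0`) of `q(N)` acting by `t ^ j` on
`g_j`. They commute with the projection onto the even part, so `φ_t C = (0, F t)` where
`F t = ∑ t ^ j B_j` is a Laurent polynomial in `t` with `F 1 = 1`, and since `[C, C] = 2 (I, 0)`
lies in `g₀` and is fixed, `F t * F t = 1`. The trace of an involution is `N - 2 r` with `r`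
the rank of `(1 - F t) / 2`, so the Laurent polynomial `tr (F t)` takes finitely many values;
hence it is constant, equal to `tr (F 1) = N`, and an involution of trace `N` is the identity. Thus
`φ_2 C = C`, and as `2 ^ j ≠ 1` for `j ≠ 0` this forces `C ∈ g₀`. -/

/-- The queer Lie superalgebra `q(N)` realized as pairs `(S, S')` of `N × N` complex
matrices, with bracket
`[(S₁,S₁'),(S₂,S₂')] = (S₁S₂ − S₂S₁ + S₁'S₂' + S₂'S₁', S₁S₂' − S₂'S₁ + S₁'S₂ − S₂S₁')`. -/
noncomputable def qBracket {N : ℕ} (x y : Matrix (Fin N) (Fin N) ℂ × Matrix (Fin N) (Fin N) ℂ) :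
    Matrix (Fin N) (Fin N) ℂ × Matrix (Fin N) (Fin N) ℂ :=
  (x.1 * y.1 - y.1 * x.1 + x.2 * y.2 + y.2 * x.2,
   x.1 * y.2 - y.2 * x.1 + x.2 * y.1 - y.1 * x.2)

open Module

namespace DirectSum.IsInternal

variable {ι R M : Type*} [DecidableEq ι] [CommRing R] [AddCommGroup M] [Module R M]
  {g : ι → Submodule R M}

theorem linearMap_ext (h : IsInternal g) {P : Type*} [AddCommGroup P] [Module R P]
    {f f' : M →ₗ[R] P} (hf : ∀ i, ∀ x ∈ g i, f x = f' x) : f = f' :=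
  LinearMap.ext fun x => Submodule.iSup_induction g (motive := fun x => f x = f' x)
    (h.submodule_iSup_eq_top ▸ Submodule.mem_top) hf (by simp)
    (fun x y hx hy => by simp [hx, hy])

noncomputable def scaling (h : IsInternal g) (χ : ι → R) : M →ₗ[R] M :=
  DirectSum.toModule R ι M (fun i => χ i • (g i).subtype) ∘ₗ
    (LinearEquiv.ofBijective (DirectSum.coeLinearMap g) h).symm.toLinearMap

theorem scaling_of_mem (h : IsInternal g) (χ : ι → R) {i : ι} {x : M} (hx : x ∈ g i) :
    h.scaling χ x = χ i • x := by
  have hdecomp : (LinearEquiv.ofBijective (DirectSum.coeLinearMap g) h).symm x =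
      DirectSum.lof R ι (fun i => g i) i ⟨x, hx⟩ := by
    rw [LinearEquiv.symm_apply_eq]
    exact (DirectSum.coeLinearMap_of g i ⟨x, hx⟩).symm
  rw [scaling, LinearMap.comp_apply, LinearEquiv.coe_coe, hdecomp, DirectSum.toModule_lof]
  rfl

theorem exists_finset_sum_eq (h : IsInternal g) (x : M) :
    ∃ (s : Finset ι) (y : ι → M), (∀ i, y i ∈ g i) ∧ ∑ i ∈ s, y i = x := by
  obtain ⟨y, hy, rfl⟩ := (Submodule.mem_iSup_iff_exists_finsupp g x).mp
    (h.submodule_iSup_eq_top ▸ Submodule.mem_top)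
  exact ⟨y.support, y, hy, rfl⟩

theorem scaling_sum (h : IsInternal g) (χ : ι → R) (s : Finset ι) {y : ι → M}
    (hy : ∀ i, y i ∈ g i) : h.scaling χ (∑ i ∈ s, y i) = ∑ i ∈ s, χ i • y i := by
  simp [h.scaling_of_mem χ (hy _)]

theorem scaling_comp_comm (h : IsInternal g) (χ : ι → R) {π : M →ₗ[R] M}
    (hπ : ∀ i, ∀ x ∈ g i, π x ∈ g i) : h.scaling χ ∘ₗ π = π ∘ₗ h.scaling χ :=
  h.linearMap_ext fun i x hx => by
    simp [h.scaling_of_mem χ hx, h.scaling_of_mem χ (hπ i x hx)]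

theorem scaling_apply₂ [AddMonoid ι] (h : IsInternal g) (χ : ι → R)
    (hχ : ∀ i j, χ (i + j) = χ i * χ j) (B : M →ₗ[R] M →ₗ[R] M)
    (hB : ∀ i j, ∀ x ∈ g i, ∀ y ∈ g j, B x y ∈ g (i + j)) (x y : M) :
    h.scaling χ (B x y) = B (h.scaling χ x) (h.scaling χ y) := by
  suffices B.compr₂ (h.scaling χ) = B.compl₁₂ (h.scaling χ) (h.scaling χ) from
    congr($this x y)
  refine h.linearMap_ext fun i x hx => h.linearMap_ext fun j y hy => ?_
  simp [h.scaling_of_mem χ hx, h.scaling_of_mem χ hy, h.scaling_of_mem χ (hB i j x hx y hy),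
    hχ, mul_smul, smul_comm (χ i)]

theorem mem_of_scaling_eq_smul (h : IsInternal g) (χ : ι → R) {i : ι}
    (hχ : ∀ j ≠ i, IsUnit (χ j - χ i)) {x : M} (hx : h.scaling χ x = χ i • x) : x ∈ g i := by
  obtain ⟨s, y, hy, rfl⟩ := h.exists_finset_sum_eq x
  rw [h.scaling_sum χ s hy, Finset.smul_sum] at hx
  have hyi : ∀ j ∈ s, χ j • y j = χ i • y j :=
    (iSupIndep_iff_finsetSum_eq_imp_eq g).mp h.submodule_iSupIndep s _ _
      (fun j _ => ⟨Submodule.smul_mem _ _ (hy j), Submodule.smul_mem _ _ (hy j)⟩) hx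
  have hy0 : ∀ j ∈ s, j ≠ i → y j = 0 := fun j hj hji =>
    (hχ j hji).smul_left_cancel.mp (by rw [smul_zero, sub_smul, hyi j hj, sub_self])
  refine Submodule.sum_mem _ fun j hj => ?_
  obtain rfl | hji := eq_or_ne j i
  exacts [hy j, hy0 j hj hji ▸ zero_mem _]

end DirectSum.IsInternal

section Involution

variable {K : Type*} [Field K] [CharZero K]

theorem isIdempotentElem_half_smul_one_sub {A : Type*} [Ring A] [Algebra K A] {f : A}
    (hf : f * f = 1) : IsIdempotentElem ((2 : K)⁻¹ • (1 - f)) := by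
  have hsq : (1 - f) * (1 - f) = (2 : K) • (1 - f) := by
    rw [two_smul, sub_mul, mul_sub, mul_sub, hf]; noncomm_ring
  rw [IsIdempotentElem, smul_mul_smul_comm, hsq, smul_smul, mul_assoc,
    inv_mul_cancel₀ two_ne_zero, mul_one]

variable {V : Type*} [AddCommGroup V] [Module K V] [FiniteDimensional K V]

theorem Module.End.exists_trace_eq_of_mul_self_eq_one {f : End K V} (hf : f * f = 1) :
    ∃ r ≤ finrank K V, LinearMap.trace K V f = finrank K V - 2 * r := by
  have he := isIdempotentElem_half_smul_one_sub (K := K) hf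
  refine ⟨finrank K (LinearMap.range ((2 : K)⁻¹ • (1 - f))), Submodule.finrank_le _, ?_⟩
  rw [← (LinearMap.IsIdempotentElem.isProj_range _ he).trace, map_smul, map_sub,
    LinearMap.trace_one, smul_eq_mul]
  field_simp
  ring

theorem Module.End.eq_one_of_mul_self_eq_one_of_trace_eq {f : End K V} (hf : f * f = 1)
    (htr : LinearMap.trace K V f = finrank K V) : f = 1 := by
  have he := isIdempotentElem_half_smul_one_sub (K := K) hf
  have h0 : (2 : K)⁻¹ • (1 - f) = 0 :=
    LinearMap.IsIdempotentElem.eq_zero_of_trace_eq_zero he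
      (by rw [map_smul, map_sub, LinearMap.trace_one, htr, sub_self, smul_zero])
  rw [smul_eq_zero, sub_eq_zero] at h0
  exact (h0.resolve_left (inv_ne_zero two_ne_zero)).symm

end Involution

theorem sum_mul_zpow_eq_of_infinite {K : Type*} [Field K] (s : Finset ℤ) (a : ℤ → K) (v : K)
    (hinf : {t : K | t ≠ 0 ∧ ∑ j ∈ s, a j * t ^ j = v}.Infinite) {t : K} (ht : t ≠ 0) :
    ∑ j ∈ s, a j * t ^ j = v := by
  obtain ⟨m, hm⟩ : ∃ m : ℕ, ∀ j ∈ s, 0 ≤ j + m :=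
    ⟨s.sup fun j => (-j).toNat, fun j hj => by
      have := Finset.le_sup (f := fun j => (-j).toNat) hj; omega⟩
  set p : Polynomial K := ∑ j ∈ s, Polynomial.C (a j) * Polynomial.X ^ (j + m).toNat
  have hp : ∀ t : K, t ≠ 0 → p.eval t = (∑ j ∈ s, a j * t ^ j) * t ^ m := fun t ht => by
    simp only [p, Polynomial.eval_finsetSum, Polynomial.eval_mul, Polynomial.eval_C,
      Polynomial.eval_pow, Polynomial.eval_X, Finset.sum_mul, mul_assoc]
    refine Finset.sum_congr rfl fun j hj => ?_
    rw [← zpow_natCast, ← zpow_natCast, ← zpow_add₀ ht, Int.toNat_of_nonneg (hm j hj)]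
  have hpq : p = Polynomial.C v * Polynomial.X ^ m :=
    Polynomial.eq_of_infinite_eval_eq _ _ <|
      hinf.mono fun t (htv : t ≠ 0 ∧ _) => by simp [hp t htv.1, htv.2]
  have := hp t ht
  rw [hpq] at this
  simpa [ht] using this.symm

theorem sum_mul_zpow_eq_of_finite_values {K : Type*} [Field K] [Infinite K] (s : Finset ℤ)
    (a : ℤ → K) {T : Set K} (hT : T.Finite) (hval : ∀ t ≠ 0, ∑ j ∈ s, a j * t ^ j ∈ T)
    {t u : K} (ht : t ≠ 0) (hu : u ≠ 0) : ∑ j ∈ s, a j * t ^ j = ∑ j ∈ s, a j * u ^ j := by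
  obtain ⟨v, -, hv⟩ : ∃ v ∈ T, {t : K | t ≠ 0 ∧ ∑ j ∈ s, a j * t ^ j = v}.Infinite := by
    by_contra! hfin
    refine (Set.finite_singleton (0 : K)).infinite_compl
      ((hT.biUnion fun v hv => hfin v hv).subset fun t ht => ?_)
    exact Set.mem_biUnion (hval t ht) ⟨ht, rfl⟩
  rw [sum_mul_zpow_eq_of_infinite s a v hv ht, sum_mul_zpow_eq_of_infinite s a v hv hu]

theorem Matrix.sum_zpow_smul_eq_one {K : Type*} [Field K] [CharZero K] {n : Type*} [Fintype n]
    [DecidableEq n] (s : Finset ℤ) (A : ℤ → Matrix n n K)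
    (hinv : ∀ t : K, t ≠ 0 → (∑ j ∈ s, t ^ j • A j) * (∑ j ∈ s, t ^ j • A j) = 1)
    (hone : ∑ j ∈ s, A j = 1) {t : K} (ht : t ≠ 0) : ∑ j ∈ s, t ^ j • A j = 1 := by
  set f : K → End K (n → K) := fun t => Matrix.toLin' (∑ j ∈ s, t ^ j • A j)
  have hfinv : ∀ t ≠ 0, f t * f t = 1 := fun t ht => by
    rw [Module.End.mul_eq_comp, ← Matrix.toLin'_mul, hinv t ht, Matrix.toLin'_one]; rfl
  have htr : ∀ t, LinearMap.trace K _ (f t) = ∑ j ∈ s, (A j).trace * t ^ j := fun t => by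
    simp [f, mul_comm]
  have hvalues : ((fun r : ℕ => (Fintype.card n : K) - 2 * r) '' Set.Iic (Fintype.card n)).Finite :=
    (Set.finite_Iic _).image _
  have hconst := sum_mul_zpow_eq_of_finite_values s _ hvalues (fun t ht => by
    obtain ⟨r, hr, htr'⟩ := Module.End.exists_trace_eq_of_mul_self_eq_one (hfinv t ht)
    rw [← htr t, htr']
    exact ⟨r, by simpa using hr, by simp⟩) ht one_ne_zero
  have hft : f t = 1 := Module.End.eq_one_of_mul_self_eq_one_of_trace_eq (hfinv t ht) (by
    rw [htr, hconst, Module.finrank_fintype_fun_eq_card]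
    simp only [_root_.one_zpow, mul_one]
    rw [← Matrix.trace_sum, hone, Matrix.trace_one])
  exact Matrix.toLin'.injective (hft.trans Matrix.toLin'_one.symm)

noncomputable def qBracketBilin (N : ℕ) :
    Matrix (Fin N) (Fin N) ℂ × Matrix (Fin N) (Fin N) ℂ →ₗ[ℂ]
      Matrix (Fin N) (Fin N) ℂ × Matrix (Fin N) (Fin N) ℂ →ₗ[ℂ]
        Matrix (Fin N) (Fin N) ℂ × Matrix (Fin N) (Fin N) ℂ :=
  LinearMap.mk₂ ℂ qBracket
    (fun _ _ _ => by ext <;> simp [qBracket, add_mul, mul_add] <;> abel)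
    (fun _ _ _ => by ext <;> simp [qBracket, smul_sub, smul_add])
    (fun _ _ _ => by ext <;> simp [qBracket, add_mul, mul_add] <;> abel)
    (fun _ _ _ => by ext <;> simp [qBracket, smul_sub, smul_add])

theorem qBracket_odd_odd {N : ℕ} (F G : Matrix (Fin N) (Fin N) ℂ) :
    qBracket (0, F) (0, G) = (F * G + G * F, 0) := by
  simp [qBracket]

theorem Complex.two_zpow_ne_one {j : ℤ} (hj : j ≠ 0) : (2 : ℂ) ^ j ≠ 1 := by
  rw [← Complex.ofReal_ofNat, ← Complex.ofReal_zpow, Ne, Complex.ofReal_eq_one,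
    zpow_eq_one_iff_right₀ zero_le_two (by norm_num)]
  exact hj

theorem stmt1_general {N : ℕ}
    (g : ℤ → Submodule ℂ (Matrix (Fin N) (Fin N) ℂ × Matrix (Fin N) (Fin N) ℂ))
    (hinternal : DirectSum.IsInternal g)
    (hbracket : ∀ i j : ℤ, ∀ x ∈ g i, ∀ y ∈ g j, qBracket x y ∈ g (i + j))
    (hcompat : ∀ j : ℤ, ∀ x ∈ g j,
      ((x.1, 0) : Matrix (Fin N) (Fin N) ℂ × Matrix (Fin N) (Fin N) ℂ) ∈ g j)
    (hcenter : (((1 : Matrix (Fin N) (Fin N) ℂ), (0 : Matrix (Fin N) (Fin N) ℂ)) :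
      Matrix (Fin N) (Fin N) ℂ × Matrix (Fin N) (Fin N) ℂ) ∈ g 0) :
    (((0 : Matrix (Fin N) (Fin N) ℂ), (1 : Matrix (Fin N) (Fin N) ℂ)) :
      Matrix (Fin N) (Fin N) ℂ × Matrix (Fin N) (Fin N) ℂ) ∈ g 0 := by
  set C : Matrix (Fin N) (Fin N) ℂ × Matrix (Fin N) (Fin N) ℂ := (0, 1)
  set φ := fun t : ℂ => hinternal.scaling (fun j => t ^ j)
  obtain ⟨s, y, hy, hsum⟩ := hinternal.exists_finset_sum_eq C
  have hφC : ∀ t, φ t C = (0, ∑ j ∈ s, t ^ j • (y j).2) := fun t => by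
    have hπ := hinternal.scaling_comp_comm (fun j => t ^ j)
      (π := LinearMap.inl ℂ _ _ ∘ₗ LinearMap.fst ℂ _ _) hcompat
    ext1
    · simpa [C, Prod.mk_zero_zero] using congr(Prod.fst ($hπ C)).symm
    · rw [← hsum, hinternal.scaling_sum _ s hy, Prod.snd_sum]; rfl
  have hinv : ∀ t : ℂ, t ≠ 0 →
      (∑ j ∈ s, t ^ j • (y j).2) * (∑ j ∈ s, t ^ j • (y j).2) = 1 := fun t ht => by
    have hCC : qBracket C C = (2 : ℂ) • (1, 0) := by ext1 <;> simp [C, qBracket, two_smul]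
    have hφCC := hinternal.scaling_apply₂ (fun j => t ^ j) (fun i j => zpow_add₀ ht i j)
      (qBracketBilin N) hbracket C C
    simp only [qBracketBilin, LinearMap.mk₂_apply] at hφCC
    rw [hCC, hinternal.scaling_of_mem _ (Submodule.smul_mem _ _ hcenter), zpow_zero, one_smul,
      hφC, qBracket_odd_odd] at hφCC
    have h2 := congrArg Prod.fst hφCC
    rw [Prod.smul_fst, ← two_smul ℂ] at h2
    exact (smul_right_injective _ two_ne_zero h2).symm
  have hφ2 : φ 2 C = C := by
    rw [hφC, Matrix.sum_zpow_smul_eq_one s _ hinv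
      (by simpa [Prod.snd_sum] using congrArg Prod.snd hsum) two_ne_zero]
  exact hinternal.mem_of_scaling_eq_smul _
    (fun j hj => (sub_ne_zero.mpr (Complex.two_zpow_ne_one hj)).isUnit) (by simpa using hφ2)

/-- Let `(g_j)_{j∈ℤ}` be a ℤ-grading of `g = q(N)` such that the central
element `(I_N, 0)` lies in `g₀`. Then the odd element `C = (0, I_N)` also lies in `g₀`. -/
theorem stmt1 {N : ℕ}
    (g : ℤ → Submodule ℂ (Matrix (Fin N) (Fin N) ℂ × Matrix (Fin N) (Fin N) ℂ))
    (hfin : {j : ℤ | g j ≠ ⊥}.Finite)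
    (hinternal : DirectSum.IsInternal g)
    (hbracket : ∀ i j : ℤ, ∀ x ∈ g i, ∀ y ∈ g j, qBracket x y ∈ g (i + j))
    (hcompat : ∀ j : ℤ, ∀ x ∈ g j,
      ((x.1, 0) : Matrix (Fin N) (Fin N) ℂ × Matrix (Fin N) (Fin N) ℂ) ∈ g j)
    (hcenter : (((1 : Matrix (Fin N) (Fin N) ℂ), (0 : Matrix (Fin N) (Fin N) ℂ)) :
      Matrix (Fin N) (Fin N) ℂ × Matrix (Fin N) (Fin N) ℂ) ∈ g 0) :
    (((0 : Matrix (Fin N) (Fin N) ℂ), (1 : Matrix (Fin N) (Fin N) ℂ)) :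
      Matrix (Fin N) (Fin N) ℂ × Matrix (Fin N) (Fin N) ℂ) ∈ g 0 :=
  stmt1_general g hinternal hbracket hcompat hcenter
end

section
/- Suppose the grading (g_j)_{j∈ℤ} of M_N(ℂ) determined by h is good for the nilpotent matrix e ∈ g₂, i.e. the centralizer {x ∈ M_N(ℂ) : xe = ex} is contained in ⊕_{j≥0} g_j. Then the anticommutant {x ∈ M_N(ℂ) : xe + ex = 0} is also contained in ⊕_{j≥0} g_j. (This is the content of the statement that a ℤ-grading of q(N) is good for the nilpotent linear functional χ if and only if its restriction to the even part gl(N) is a good grading for e.) -/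
/-- The `ad h`-eigenspace grading of `M_N(ℂ)`:
`g_j = {x ∈ M_N(ℂ) : hx − xh = j·x}`. -/
noncomputable def adGrading {N : ℕ} (h : Matrix (Fin N) (Fin N) ℂ) (j : ℤ) :
    Submodule ℂ (Matrix (Fin N) (Fin N) ℂ) where
  carrier := {x | h * x - x * h = (j : ℂ) • x}
  zero_mem' := by simp
  add_mem' := by
    intro a b ha hb
    simp only [Set.mem_setOf_eq] at ha hb ⊢
    rw [smul_add, ← ha, ← hb]
    noncomm_ring
  smul_mem' := by
    intro c a ha
    simp only [Set.mem_setOf_eq] at ha ⊢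
    rw [mul_smul_comm, smul_mul_assoc, ← smul_sub, ha]
    exact smul_comm _ _ _

/-!
Since `ad h` acts on `e` by `2`, the element `s = exp (πi/2 · h)` satisfies
`s e s⁻¹ = exp (πi/2 · ad h) e = exp (πi) e = -e`, while `s` commutes with `h`.
So if `x` anticommutes with `e`, then `s x` commutes with `e` and lies in `⊕_{j≥0} g_j` by
goodness; left multiplication by `s⁻¹`, which commutes with `h`, preserves every `g_j`.
-/

open NormedSpace Complex Real

section BanachAlgebra

variable {𝔸 : Type*} [NormedRing 𝔸] [NormedAlgebra ℂ 𝔸] [CompleteSpace 𝔸]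

theorem exp_smul_mul_eq_neg_mul_exp {h e : 𝔸} (he : h * e - e * h = (2 : ℂ) • e) :
    exp ((π * I / 2) • h) * e = -(e * exp ((π * I / 2) • h)) := by
  -- `exp` itself does not depend on a `ℚ`-algebra structure; the lemmas about it need a normed one.
  let +nondep : NormedAlgebra ℚ 𝔸 := .restrictScalars ℚ ℂ 𝔸
  set a := (π * I / 2) • h
  have hsemi : SemiconjBy e (a + (π * I) • 1) a := by
    have hbracket : a * e - e * a = (π * I) • e := by
      rw [smul_mul_assoc, mul_smul_comm, ← smul_sub, he, smul_smul]
      congr 1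
      ring
    rw [SemiconjBy, mul_add, mul_smul_one, ← hbracket]
    abel
  have hshift : exp (a + (π * I) • (1 : 𝔸)) = -exp a := by
    rw [exp_add_of_commute ((Commute.one_right a).smul_right _), ← Algebra.algebraMap_eq_smul_one,
      ← algebraMap_exp_comm, ← Complex.exp_eq_exp_ℂ, Complex.exp_pi_mul_I, map_neg, map_one,
      mul_neg_one]
  rw [← hsemi.exp_right, hshift, mul_neg]

theorem exists_unit_commute_and_mul_eq_neg_mul {h e : 𝔸} (he : h * e - e * h = (2 : ℂ) • e) :
    ∃ s : 𝔸ˣ, Commute (s : 𝔸) h ∧ s * e = -(e * s) := by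
  let +nondep : NormedAlgebra ℚ 𝔸 := .restrictScalars ℚ ℂ 𝔸
  obtain ⟨s, hs⟩ := isUnit_exp ((π * I / 2) • h)
  refine ⟨s, ?_, hs ▸ exp_smul_mul_eq_neg_mul_exp he⟩
  rw [hs]
  exact (((Commute.refl h).smul_right _).exp_right).symm

end BanachAlgebra

section adGrading

variable {N : ℕ} {h z x : Matrix (Fin N) (Fin N) ℂ}

theorem mul_mem_adGrading (hz : Commute z h) {j : ℤ} (hx : x ∈ adGrading h j) :
    z * x ∈ adGrading h j := by
  change h * x - x * h = (j : ℂ) • x at hx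
  change h * (z * x) - z * x * h = (j : ℂ) • (z * x)
  rw [← mul_assoc, ← hz.eq, mul_assoc, mul_assoc, ← mul_sub, hx, mul_smul_comm]

theorem mul_mem_iSup_adGrading (hz : Commute z h) (hx : x ∈ ⨆ j ≥ (0 : ℤ), adGrading h j) :
    z * x ∈ ⨆ j ≥ (0 : ℤ), adGrading h j := by
  have : (⨆ j ≥ (0 : ℤ), adGrading h j) ≤
      (⨆ j ≥ (0 : ℤ), adGrading h j).comap (LinearMap.mulLeft ℂ z) :=
    iSup₂_le fun j hj _ hy =>
      le_iSup₂ (f := fun j (_ : 0 ≤ j) => adGrading h j) j hj (mul_mem_adGrading hz hy)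
  exact this hx

end adGrading

theorem stmt2_general {N : ℕ} (h e : Matrix (Fin N) (Fin N) ℂ)
    (he : e ∈ adGrading h 2)
    (hgood : ∀ x : Matrix (Fin N) (Fin N) ℂ, x * e = e * x →
      x ∈ ⨆ j ≥ (0 : ℤ), adGrading h j) :
    ∀ x : Matrix (Fin N) (Fin N) ℂ, x * e + e * x = 0 →
      x ∈ ⨆ j ≥ (0 : ℤ), adGrading h j := by
  intro x hx
  have he' : h * e - e * h = (2 : ℂ) • e := by simpa [adGrading] using he
  obtain ⟨s, hsh, hse⟩ := open scoped Matrix.Norms.Operator in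
    exists_unit_commute_and_mul_eq_neg_mul he'
  have hsx : s * x * e = e * (s * x) := by
    rw [mul_assoc, eq_neg_of_add_eq_zero_left hx, mul_neg, ← mul_assoc, hse, neg_mul, neg_neg,
      mul_assoc]
  simpa using mul_mem_iSup_adGrading (z := ↑s⁻¹) hsh.units_inv_left (hgood _ hsx)

/-- Suppose the grading `(g_j)_{j∈ℤ}` of `M_N(ℂ)` determined by `h` is good
for the nilpotent matrix `e ∈ g₂`, i.e. the centralizer `{x : xe = ex}` is contained in
`⊕_{j≥0} g_j`. Then the anticommutant `{x : xe + ex = 0}` is also contained in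
`⊕_{j≥0} g_j`. -/
theorem stmt2 {N : ℕ} (h e : Matrix (Fin N) (Fin N) ℂ)
    (hinternal : DirectSum.IsInternal (adGrading h))
    (hnil : IsNilpotent e)
    (he : e ∈ adGrading h 2)
    (hgood : ∀ x : Matrix (Fin N) (Fin N) ℂ, x * e = e * x →
      x ∈ ⨆ j ≥ (0 : ℤ), adGrading h j) :
    ∀ x : Matrix (Fin N) (Fin N) ℂ, x * e + e * x = 0 →
      x ∈ ⨆ j ≥ (0 : ℤ), adGrading h j :=
  stmt2_general h e he hgood
end

section
/- The space of matrices anticommuting with e has dimension dim_ℂ {z ∈ M_N(ℂ) : ze + ez = 0} = Σ_{i=1}^{n} Σ_{j=1}^{n} min(p_i, p_j). -/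
/-- The block-diagonal nilpotent matrix whose diagonal blocks are Jordan blocks of sizes
`p 0, ..., p (n-1)` with eigenvalue `0` (1's on the superdiagonal).  In 0-based indexing,
the `(i, j)` entry is `1` exactly when `j = i + 1` and `j` is not the first position of a
block, i.e. `j ≠ ∑_{k < m} p k` for every `m`. -/
noncomputable def jordanMatrix (n N : ℕ) (p : Fin n → ℕ) : Matrix (Fin N) (Fin N) ℂ :=
  Matrix.of fun i j =>
    if (j : ℕ) = (i : ℕ) + 1 ∧
        (∀ m : Fin n, (j : ℕ) ≠ ∑ k ∈ Finset.univ.filter (fun k => k < m), p k)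
    then 1 else 0

namespace Stmt3Aux

variable {n : ℕ} (p : Fin n → ℕ)

/-- The sigma index type for the block structure. -/
abbrev T (p : Fin n → ℕ) := Σ i : Fin n, Fin (p i)

/-- The block-superdiagonal nilpotent matrix on the sigma type. -/
def E : Matrix (T p) (T p) ℂ :=
  Matrix.of fun x y => if (y.1 : ℕ) = (x.1 : ℕ) ∧ (y.2 : ℕ) = (x.2 : ℕ) + 1 then 1 else 0

lemma E_mul_apply (z : Matrix (T p) (T p) ℂ) (i : Fin n) (a : Fin (p i)) (y : T p) :
    (E p * z) ⟨i, a⟩ y =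
      if h : (a : ℕ) + 1 < p i then z ⟨i, ⟨(a : ℕ) + 1, h⟩⟩ y else 0 := by
  rw [Matrix.mul_apply]
  split_ifs with h
  · rw [Finset.sum_eq_single (⟨i, ⟨(a : ℕ) + 1, h⟩⟩ : T p)]
    · simp [E]
    · rintro ⟨w1, w2⟩ - hw
      suffices hE : E p ⟨i, a⟩ ⟨w1, w2⟩ = 0 by rw [hE, zero_mul]
      simp only [E, Matrix.of_apply, ite_eq_right_iff]
      rintro ⟨h1, h2⟩
      exfalso; apply hw
      obtain rfl : w1 = i := Fin.ext h1
      obtain rfl : w2 = ⟨(a : ℕ) + 1, h⟩ := Fin.ext h2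
      rfl
    · simp
  · apply Finset.sum_eq_zero
    rintro ⟨w1, w2⟩ -
    suffices hE : E p ⟨i, a⟩ ⟨w1, w2⟩ = 0 by rw [hE, zero_mul]
    simp only [E, Matrix.of_apply, ite_eq_right_iff]
    rintro ⟨h1, h2⟩
    exfalso
    obtain rfl : w1 = i := Fin.ext h1
    have := w2.isLt; omega

lemma mul_E_apply (z : Matrix (T p) (T p) ℂ) (x : T p) (j : Fin n) (b : Fin (p j)) :
    (z * E p) x ⟨j, b⟩ =
      if 1 ≤ (b : ℕ) then
        z x ⟨j, ⟨(b : ℕ) - 1, lt_of_le_of_lt (Nat.pred_le _) b.isLt⟩⟩ else 0 := by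
  rw [Matrix.mul_apply]
  split_ifs with h
  · rw [Finset.sum_eq_single (⟨j, ⟨(b : ℕ) - 1, lt_of_le_of_lt (Nat.pred_le _) b.isLt⟩⟩ : T p)]
    · suffices hE : E p ⟨j, ⟨(b : ℕ) - 1, lt_of_le_of_lt (Nat.pred_le _) b.isLt⟩⟩ ⟨j, b⟩ = 1 by
        rw [hE, mul_one]
      simp only [E, Matrix.of_apply]
      rw [if_pos ⟨trivial, by omega⟩]
    · rintro ⟨w1, w2⟩ - hw
      suffices hE : E p ⟨w1, w2⟩ ⟨j, b⟩ = 0 by rw [hE, mul_zero]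
      simp only [E, Matrix.of_apply, ite_eq_right_iff]
      rintro ⟨h1, h2⟩
      exfalso; apply hw
      obtain rfl : w1 = j := Fin.ext h1.symm
      obtain rfl : w2 = ⟨(b : ℕ) - 1, lt_of_le_of_lt (Nat.pred_le _) b.isLt⟩ :=
        Fin.ext (show (w2 : ℕ) = (b : ℕ) - 1 by omega)
      rfl
    · simp
  · apply Finset.sum_eq_zero
    rintro ⟨w1, w2⟩ -
    suffices hE : E p ⟨w1, w2⟩ ⟨j, b⟩ = 0 by rw [hE, mul_zero]
    simp only [E, Matrix.of_apply, ite_eq_right_iff]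
    rintro ⟨h1, h2⟩
    exfalso; omega

/-- The recurrence satisfied by matrices in the anticommutant. -/
def AntiRel (z : Matrix (T p) (T p) ℂ) : Prop :=
  ∀ (i : Fin n) (a : Fin (p i)) (j : Fin n) (b : Fin (p j)),
    (if h : (a : ℕ) + 1 < p i then z ⟨i, ⟨(a : ℕ) + 1, h⟩⟩ ⟨j, b⟩ else 0) +
      (if 1 ≤ (b : ℕ) then
        z ⟨i, a⟩ ⟨j, ⟨(b : ℕ) - 1, lt_of_le_of_lt (Nat.pred_le _) b.isLt⟩⟩ else 0) = 0

lemma mem_ker_iff (z : Matrix (T p) (T p) ℂ) :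
    z ∈ LinearMap.ker (LinearMap.mulLeft ℂ (E p) + LinearMap.mulRight ℂ (E p)) ↔
      AntiRel p z := by
  rw [LinearMap.mem_ker, LinearMap.add_apply, LinearMap.mulLeft_apply,
    LinearMap.mulRight_apply]
  constructor
  · intro h i a j b
    have h2 := congrFun (congrFun h ⟨i, a⟩) ⟨j, b⟩
    rw [Matrix.add_apply, Matrix.zero_apply, E_mul_apply, mul_E_apply] at h2
    exact h2
  · intro h
    ext ⟨i, a⟩ ⟨j, b⟩
    rw [Matrix.add_apply, Matrix.zero_apply, E_mul_apply, mul_E_apply]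
    exact h i a j b

lemma prop_diag {z : Matrix (T p) (T p) ℂ} (hz : AntiRel p z) (t : ℕ) (i j : Fin n)
    (a b : ℕ) (ha : a + t < p i) (hb : b + t < p j) :
    z ⟨i, ⟨a + t, ha⟩⟩ ⟨j, ⟨b + t, hb⟩⟩ =
      (-1 : ℂ) ^ t * z ⟨i, ⟨a, by omega⟩⟩ ⟨j, ⟨b, by omega⟩⟩ := by
  induction t with
  | zero => simp
  | succ t ih =>
    have key := hz i ⟨a + t, by omega⟩ j ⟨b + (t + 1), hb⟩
    rw [dif_pos (show ((⟨a + t, by omega⟩ : Fin (p i)) : ℕ) + 1 < p i from ha),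
      if_pos (show 1 ≤ ((⟨b + (t + 1), hb⟩ : Fin (p j)) : ℕ) from
        Nat.succ_le_succ (Nat.zero_le _))] at key
    have key2 : z ⟨i, ⟨a + (t + 1), ha⟩⟩ ⟨j, ⟨b + (t + 1), hb⟩⟩ =
        -z ⟨i, ⟨a + t, by omega⟩⟩ ⟨j, ⟨b + t, by omega⟩⟩ :=
      eq_neg_of_add_eq_zero_left key
    rw [key2, ih (by omega) (by omega), pow_succ]
    ring

lemma col0 {z : Matrix (T p) (T p) ℂ} (hz : AntiRel p z) (i j : Fin n) (a : ℕ)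
    (ha : a + 1 < p i) (hb : 0 < p j) :
    z ⟨i, ⟨a + 1, ha⟩⟩ ⟨j, ⟨0, hb⟩⟩ = 0 := by
  have key := hz i ⟨a, by omega⟩ j ⟨0, hb⟩
  rw [dif_pos (show ((⟨a, by omega⟩ : Fin (p i)) : ℕ) + 1 < p i from ha),
    if_neg (by simp)] at key
  simpa using key

lemma lastrow {z : Matrix (T p) (T p) ℂ} (hz : AntiRel p z) (i j : Fin n) (a b : ℕ)
    (ha' : a + 1 = p i) (hb : b + 1 < p j) :
    z ⟨i, ⟨a, by omega⟩⟩ ⟨j, ⟨b, by omega⟩⟩ = 0 := by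
  have key := hz i ⟨a, by omega⟩ j ⟨b + 1, hb⟩
  rw [dif_neg (show ¬((⟨a, by omega⟩ : Fin (p i)) : ℕ) + 1 < p i by simp; omega),
    if_pos (show 1 ≤ ((⟨b + 1, hb⟩ : Fin (p j)) : ℕ) from Nat.succ_le_succ (Nat.zero_le _))] at key
  simpa using key

/-- index-congruence helper -/
lemma zc2 (z : Matrix (T p) (T p) ℂ) {i j : Fin n} {a a' b b' : ℕ}
    (ha : a < p i) (ha' : a' < p i) (hb : b < p j) (hb' : b' < p j)
    (e1 : a = a') (e2 : b = b') :
    z ⟨i, ⟨a, ha⟩⟩ ⟨j, ⟨b, hb⟩⟩ = z ⟨i, ⟨a', ha'⟩⟩ ⟨j, ⟨b', hb'⟩⟩ := by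
  subst e1; subst e2; rfl

lemma inj_aux (hpos : ∀ i, 1 ≤ p i) {z : Matrix (T p) (T p) ℂ} (hz : AntiRel p z)
    (h0 : ∀ (i j : Fin n) (k : ℕ) (hk : k < min (p i) (p j)),
      z ⟨i, ⟨0, hpos i⟩⟩ ⟨j, ⟨p j - min (p i) (p j) + k, by omega⟩⟩ = 0) :
    z = 0 := by
  ext ⟨i, a, ha⟩ ⟨j, b, hb⟩
  simp only [Matrix.zero_apply]
  rcases Nat.lt_or_ge b a with hab | hab
  · -- below the diagonal: propagate up-left to the first column
    obtain ⟨c, rfl⟩ : ∃ c, a = c + 1 + b := ⟨a - b - 1, by omega⟩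
    have key : z ⟨i, ⟨c + 1 + b, ha⟩⟩ ⟨j, ⟨b, hb⟩⟩ =
        (-1 : ℂ) ^ b * z ⟨i, ⟨c + 1, by omega⟩⟩ ⟨j, ⟨0, by omega⟩⟩ := by
      rw [zc2 p z ha (by omega) hb (by omega) rfl (show b = 0 + b by omega)]
      exact prop_diag p hz b i j (c + 1) 0 (by omega) (by omega)
    rw [key, col0 p hz i j c (by omega) (by omega), mul_zero]
  · rcases Nat.lt_or_ge (b - a) (p j - min (p i) (p j)) with hs | hs
    · -- propagate down-right to the last row
      have key : z ⟨i, ⟨p i - 1, by omega⟩⟩ ⟨j, ⟨b + (p i - 1 - a), by omega⟩⟩ =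
          (-1 : ℂ) ^ (p i - 1 - a) * z ⟨i, ⟨a, ha⟩⟩ ⟨j, ⟨b, hb⟩⟩ := by
        rw [zc2 p z (by omega) (by omega) (by omega) (by omega)
          (show p i - 1 = a + (p i - 1 - a) by omega) rfl]
        exact prop_diag p hz (p i - 1 - a) i j a b (by omega) (by omega)
      rw [lastrow p hz i j (p i - 1) (b + (p i - 1 - a)) (by omega) (by omega)] at key
      rcases mul_eq_zero.mp key.symm with h' | h'
      · exact absurd h' (pow_ne_zero _ (by norm_num))
      · exact h'
    · -- propagate up-left to the top row
      have key : z ⟨i, ⟨a, ha⟩⟩ ⟨j, ⟨b, hb⟩⟩ =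
          (-1 : ℂ) ^ a * z ⟨i, ⟨0, hpos i⟩⟩ ⟨j, ⟨b - a, by omega⟩⟩ := by
        rw [zc2 p z ha (by omega) hb (by omega) (show a = 0 + a by omega)
          (show b = (b - a) + a by omega)]
        exact prop_diag p hz a i j 0 (b - a) (by omega) (by omega)
      have h00 : z ⟨i, ⟨0, hpos i⟩⟩ ⟨j, ⟨b - a, by omega⟩⟩ = 0 := by
        rw [zc2 p z (hpos i) (hpos i) (by omega) (by omega) rfl
          (show b - a = p j - min (p i) (p j) + (b - a - (p j - min (p i) (p j))) by omega)]
        exact h0 i j (b - a - (p j - min (p i) (p j))) (by omega)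
      rw [key, h00, mul_zero]

/-- The explicit solution with prescribed free parameters. -/
def sol (hpos : ∀ i, 1 ≤ p i) (c : (ij : Fin n × Fin n) → Fin (min (p ij.1) (p ij.2)) → ℂ) :
    Matrix (T p) (T p) ℂ :=
  Matrix.of fun x y =>
    if h : p y.1 - min (p x.1) (p y.1) + (x.2 : ℕ) ≤ (y.2 : ℕ) then
      (-1 : ℂ) ^ (x.2 : ℕ) * c (x.1, y.1)
        ⟨(y.2 : ℕ) - (x.2 : ℕ) - (p y.1 - min (p x.1) (p y.1)),
          by
            have hy := y.2.isLt; have h1 := hpos x.1; have h2 := hpos y.1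
            show (y.2 : ℕ) - (x.2 : ℕ) - (p y.1 - min (p x.1) (p y.1)) < min (p x.1) (p y.1)
            omega⟩
    else 0

lemma sol_apply (hpos : ∀ i, 1 ≤ p i)
    (c : (ij : Fin n × Fin n) → Fin (min (p ij.1) (p ij.2)) → ℂ)
    (i : Fin n) (a : ℕ) (ha : a < p i) (j : Fin n) (b : ℕ) (hb : b < p j) :
    sol p hpos c ⟨i, ⟨a, ha⟩⟩ ⟨j, ⟨b, hb⟩⟩ =
      if h : p j - min (p i) (p j) + a ≤ b then
        (-1 : ℂ) ^ a * c (i, j)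
          ⟨b - a - (p j - min (p i) (p j)),
            by
              have h1 := hpos i; have h2 := hpos j
              show b - a - (p j - min (p i) (p j)) < min (p i) (p j)
              omega⟩
      else 0 := rfl

lemma sol_rel (hpos : ∀ i, 1 ≤ p i)
    (c : (ij : Fin n × Fin n) → Fin (min (p ij.1) (p ij.2)) → ℂ) :
    AntiRel p (sol p hpos c) := by
  rintro i ⟨a, ha⟩ j ⟨b, hb⟩
  simp only [Fin.val_mk]
  by_cases h1 : a + 1 < p i <;> by_cases h2 : 1 ≤ b
  · rw [dif_pos h1, if_pos h2,
      sol_apply p hpos c i (a + 1) h1 j b hb,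
      sol_apply p hpos c i a ha j (b - 1) (by omega)]
    by_cases hc : p j - min (p i) (p j) + (a + 1) ≤ b
    · rw [dif_pos hc, dif_pos (by omega)]
      have e : (⟨b - (a + 1) - (p j - min (p i) (p j)),
            by
              have h1 := hpos i; have h2 := hpos j
              show b - (a + 1) - (p j - min (p i) (p j)) < min (p i) (p j); omega⟩ :
              Fin (min (p i) (p j))) =
          ⟨b - 1 - a - (p j - min (p i) (p j)),
            by
              have h1 := hpos i; have h2 := hpos j
              show b - 1 - a - (p j - min (p i) (p j)) < min (p i) (p j); omega⟩ :=
        Fin.mk_eq_mk.mpr (by omega)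
      rw [e, pow_succ]
      ring
    · rw [dif_neg hc, dif_neg (by omega), add_zero]
  · rw [dif_pos h1, if_neg h2, add_zero, sol_apply p hpos c i (a + 1) h1 j b hb,
      dif_neg (by omega)]
  · rw [dif_neg h1, if_pos h2, zero_add, sol_apply p hpos c i a ha j (b - 1) (by omega),
      dif_neg (by omega)]
  · rw [dif_neg h1, if_neg h2, add_zero]

theorem key (hpos : ∀ i, 1 ≤ p i) :
    Module.finrank ℂ
      (LinearMap.ker (LinearMap.mulLeft ℂ (E p) + LinearMap.mulRight ℂ (E p))) =
      ∑ i : Fin n, ∑ j : Fin n, min (p i) (p j) := by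
  classical
  set K := LinearMap.ker (LinearMap.mulLeft ℂ (E p) + LinearMap.mulRight ℂ (E p)) with hK
  let F : Matrix (T p) (T p) ℂ →ₗ[ℂ]
      ((ij : Fin n × Fin n) → Fin (min (p ij.1) (p ij.2)) → ℂ) :=
    { toFun := fun z ij k =>
        z ⟨ij.1, ⟨0, hpos ij.1⟩⟩
          ⟨ij.2, ⟨p ij.2 - min (p ij.1) (p ij.2) + (k : ℕ), by have := k.isLt; omega⟩⟩
      map_add' := fun x y => rfl
      map_smul' := fun r x => rfl }
  let F' : K →ₗ[ℂ] ((ij : Fin n × Fin n) → Fin (min (p ij.1) (p ij.2)) → ℂ) :=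
    F.comp K.subtype
  have hinj : Function.Injective F' := by
    rw [← LinearMap.ker_eq_bot, Submodule.eq_bot_iff]
    rintro ⟨z, hzK⟩ hz0
    have hz : AntiRel p z := (mem_ker_iff p z).mp hzK
    have h0 : ∀ (i j : Fin n) (k : ℕ) (hk : k < min (p i) (p j)),
        z ⟨i, ⟨0, hpos i⟩⟩ ⟨j, ⟨p j - min (p i) (p j) + k, by omega⟩⟩ = 0 := by
      intro i j k hk
      have hF : F z = 0 := hz0
      exact congrFun (congrFun hF (i, j)) ⟨k, hk⟩
    exact Subtype.ext (inj_aux p hpos hz h0)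
  have hsurj : Function.Surjective F' := by
    intro c
    refine ⟨⟨sol p hpos c, (mem_ker_iff p _).mpr (sol_rel p hpos c)⟩, ?_⟩
    funext ij k
    obtain ⟨i, j⟩ := ij
    have hk : (k : ℕ) < min (p i) (p j) := k.isLt
    show sol p hpos c ⟨i, ⟨0, hpos i⟩⟩
      ⟨j, ⟨p j - min (p i) (p j) + (k : ℕ), by omega⟩⟩ = c (i, j) k
    rw [sol_apply p hpos c i 0 (hpos i) j (p j - min (p i) (p j) + (k : ℕ))
      (by omega), dif_pos (by omega)]
    have e : (⟨p j - min (p i) (p j) + (k : ℕ) - 0 - (p j - min (p i) (p j)),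
          by
            have h1 := hpos i; have h2 := hpos j
            show p j - min (p i) (p j) + (k : ℕ) - 0 - (p j - min (p i) (p j)) <
              min (p i) (p j)
            omega⟩ : Fin (min (p i) (p j))) = k :=
      Fin.ext (by simp)
    rw [e, pow_zero, one_mul]
  have heq := LinearEquiv.finrank_eq (LinearEquiv.ofBijective F' ⟨hinj, hsurj⟩)
  rw [heq, Module.finrank_pi_fintype]
  rw [show (∑ ij : Fin n × Fin n,
      Module.finrank ℂ (Fin (min (p ij.1) (p ij.2)) → ℂ)) =
    ∑ ij : Fin n × Fin n, min (p ij.1) (p ij.2) from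
      Finset.sum_congr rfl fun ij _ => Module.finrank_fin_fun ℂ]
  rw [Fintype.sum_prod_type]

/-- partial sums of the block sizes -/
def Base (p : Fin n → ℕ) (t : ℕ) : ℕ :=
  ∑ k ∈ Finset.univ.filter (fun k : Fin n => (k : ℕ) < t), p k

lemma Base_mono {t t' : ℕ} (h : t ≤ t') : Base p t ≤ Base p t' := by
  apply Finset.sum_le_sum_of_subset
  apply Finset.monotone_filter_right
  intro x hx
  omega

lemma Base_succ (t : ℕ) (ht : t < n) : Base p (t + 1) = Base p t + p ⟨t, ht⟩ := by
  unfold Base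
  rw [show Finset.univ.filter (fun k : Fin n => (k : ℕ) < t + 1) =
      insert ⟨t, ht⟩ (Finset.univ.filter (fun k : Fin n => (k : ℕ) < t)) from ?_,
    Finset.sum_insert (by simp), add_comm]
  ext k
  simp [Finset.mem_insert, Finset.mem_filter, Fin.ext_iff]
  omega

lemma Base_n : Base p n = ∑ i, p i := by
  unfold Base
  rw [Finset.filter_true_of_mem]
  intro k _
  exact k.isLt

lemma Base_lt {i j : Fin n} (a : Fin (p i)) (b : Fin (p j)) (hij : i < j) :
    Base p i + (a : ℕ) < Base p j + (b : ℕ) := by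
  have h1 : Base p ((i : ℕ) + 1) = Base p i + p i := by
    have := Base_succ p i i.isLt
    simpa [Fin.eta] using this
  have h2 : Base p ((i : ℕ) + 1) ≤ Base p j := Base_mono p (by have := hij; omega)
  have := a.isLt
  omega

lemma Base_inj {i j : Fin n} (a : Fin (p i)) (b : Fin (p j))
    (h : Base p i + (a : ℕ) = Base p j + (b : ℕ)) :
    (⟨i, a⟩ : T p) = ⟨j, b⟩ := by
  rcases lt_trichotomy i j with hij | hij | hij
  · exact absurd h (Nat.ne_of_lt (Base_lt p a b hij))
  · subst hij
    have : (a : ℕ) = (b : ℕ) := by omega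
    rw [Fin.ext this]
  · exact absurd h.symm (Nat.ne_of_lt (Base_lt p b a hij))

lemma Base_bound (hN : ∑ i, p i = ∑ i, p i) (x : T p) :
    Base p x.1 + (x.2 : ℕ) < ∑ i, p i := by
  obtain ⟨i, a⟩ := x
  have h1 : Base p ((i : ℕ) + 1) = Base p i + p i := by
    have := Base_succ p i i.isLt
    simpa [Fin.eta] using this
  have h2 : Base p ((i : ℕ) + 1) ≤ Base p n := Base_mono p i.isLt
  have h3 := Base_n p
  have := a.isLt
  simp only [] at *
  omega

/-- a global index is a block start iff its offset is zero -/
lemma Base_start {j : Fin n} (b : Fin (p j)) :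
    (∀ m : Fin n, Base p j + (b : ℕ) ≠ Base p m) ↔ 1 ≤ (b : ℕ) := by
  constructor
  · intro h
    by_contra hb
    have hb0 : (b : ℕ) = 0 := by omega
    exact h j (by omega)
  · intro hb m
    rcases lt_trichotomy m j with hmj | hmj | hmj
    · have : Base p m ≤ Base p j := Base_mono p (le_of_lt hmj)
      omega
    · subst hmj; omega
    · have h1 : Base p ((j : ℕ) + 1) = Base p j + p j := by
        have := Base_succ p j j.isLt
        simpa [Fin.eta] using this
      have h2 : Base p ((j : ℕ) + 1) ≤ Base p m := Base_mono p (by have := hmj; omega)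
      have := b.isLt
      omega

end Stmt3Aux

/-- Let `λ = (p₁ ≤ ... ≤ p_n)` be a partition of `N ≥ 1` and `e` the
corresponding Jordan nilpotent matrix.  The space of matrices anticommuting with `e` has
dimension `dim {z : ze + ez = 0} = Σᵢ Σⱼ min(pᵢ, pⱼ)`. -/
theorem stmt3 (n N : ℕ) (hN : 1 ≤ N) (p : Fin n → ℕ)
    (hpos : ∀ i, 1 ≤ p i) (hmono : Monotone p) (hsum : ∑ i, p i = N) :
    Module.finrank ℂ
      (LinearMap.ker (LinearMap.mulLeft ℂ (jordanMatrix n N p)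
        + LinearMap.mulRight ℂ (jordanMatrix n N p))) =
      ∑ i : Fin n, ∑ j : Fin n, min (p i) (p j) := by
  classical
  open Stmt3Aux in
  subst hsum
  -- the equivalence between the sigma type and `Fin (∑ i, p i)`
  let f : T p → Fin (∑ i, p i) := fun x => ⟨Base p x.1 + (x.2 : ℕ), Base_bound p rfl x⟩
  have hfinj : Function.Injective f := by
    intro x y hxy
    obtain ⟨i, a⟩ := x; obtain ⟨j, b⟩ := y
    exact Base_inj p a b (congrArg Fin.val hxy)
  have hfbij : Function.Bijective f := by
    rw [Fintype.bijective_iff_injective_and_card]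
    exact ⟨hfinj, by simp [Fintype.card_sigma]⟩
  let σ : T p ≃ Fin (∑ i, p i) := Equiv.ofBijective f hfbij
  have hσ : ∀ x : T p, ((σ x : ℕ)) = Base p x.1 + (x.2 : ℕ) := fun x => rfl
  -- entrywise identification of the two matrices
  have sum_eq : ∀ m : Fin n,
      (∑ k ∈ Finset.univ.filter (fun k => k < m), p k) = Base p (m : ℕ) := by
    intro m
    unfold Base
    apply Finset.sum_congr _ (fun _ _ => rfl)
    apply Finset.filter_congr
    intro k _
    exact Iff.rfl
  have entry : ∀ x y : T p, jordanMatrix n (∑ i, p i) p (σ x) (σ y) = E p x y := by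
    rintro ⟨i, a⟩ ⟨j, b⟩
    show (if ((σ ⟨j, b⟩ : ℕ)) = ((σ ⟨i, a⟩ : ℕ)) + 1 ∧
        (∀ m : Fin n, ((σ ⟨j, b⟩ : ℕ)) ≠ ∑ k ∈ Finset.univ.filter (fun k => k < m), p k)
      then (1 : ℂ) else 0) = E p ⟨i, a⟩ ⟨j, b⟩
    rw [E]
    simp only [Matrix.of_apply]
    apply if_congr _ rfl rfl
    simp only [hσ, sum_eq]
    constructor
    · rintro ⟨h1, h2⟩
      have hb1 : 1 ≤ (b : ℕ) := (Base_start p b).mp h2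
      have key : (⟨j, ⟨(b : ℕ) - 1, by have := b.isLt; omega⟩⟩ : T p) = ⟨i, a⟩ :=
        Base_inj p _ a (by simp only [Fin.val_mk]; omega)
      have e1 : j = i := congrArg Sigma.fst key
      have e2 : (b : ℕ) - 1 = (a : ℕ) := by
        have h3 := congrArg (fun x : T p => (x.2 : ℕ)) key
        simpa using h3
      exact ⟨by rw [e1], by omega⟩
    · rintro ⟨h1, h2⟩
      have hij : i = j := Fin.ext h1.symm
      subst hij
      constructor
      · omega
      · exact (Base_start p b).mpr (by omega)
  -- transport the kernel along the reindexing equivalence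
  let Rq : Matrix (T p) (T p) ℂ ≃ₗ[ℂ] Matrix (Fin (∑ i, p i)) (Fin (∑ i, p i)) ℂ :=
    Matrix.reindexLinearEquiv ℂ ℂ σ σ
  have hjm : jordanMatrix n (∑ i, p i) p = Rq (E p) := by
    ext u v
    have h := entry (σ.symm u) (σ.symm v)
    rw [Equiv.apply_symm_apply, Equiv.apply_symm_apply] at h
    rw [h]
    rfl
  have hG : (LinearMap.mulLeft ℂ (jordanMatrix n (∑ i, p i) p)
      + LinearMap.mulRight ℂ (jordanMatrix n (∑ i, p i) p)) =
      (Rq.toLinearMap ∘ₗ (LinearMap.mulLeft ℂ (E p) + LinearMap.mulRight ℂ (E p))) ∘ₗ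
        Rq.symm.toLinearMap := by
    ext z
    simp only [LinearMap.add_apply, LinearMap.mulLeft_apply, LinearMap.mulRight_apply,
      LinearMap.comp_apply, LinearEquiv.coe_coe, map_add]
    rw [hjm]
    have h1 : Rq (E p) * z = Rq (E p * Rq.symm z) := by
      conv_lhs => rw [← Rq.apply_symm_apply z]
      exact Matrix.reindexLinearEquiv_mul ℂ ℂ σ σ σ (E p) (Rq.symm z)
    have h2 : z * Rq (E p) = Rq (Rq.symm z * E p) := by
      conv_lhs => rw [← Rq.apply_symm_apply z]
      exact Matrix.reindexLinearEquiv_mul ℂ ℂ σ σ σ (Rq.symm z) (E p)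
    rw [h1, h2]
  rw [hG]
  rw [LinearMap.ker_comp, LinearMap.ker_comp_of_ker_eq_bot _ (LinearMap.ker_eq_bot.mpr
    Rq.injective)]
  rw [← Submodule.map_equiv_eq_comap_symm]
  rw [LinearEquiv.finrank_map_eq]
  exact Stmt3Aux.key p hpos
end

section
/- If z ∈ M_N(ℂ) satisfies ze + ez = 0 and z v_{t_i} = 0 for all i = 1, ..., n, then z = 0; that is, a matrix anticommuting with e is uniquely determined by its values on the last basis vector of each Jordan block. -/
/-- The standard basis vector `v_{t_i}` sitting at the last position of the `i`-th Jordan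
block, i.e. at (1-based) position `t_i = p₁ + ... + p_i`. -/
noncomputable def lastVec (n N : ℕ) (p : Fin n → ℕ) (i : Fin n) : Fin N → ℂ :=
  fun m => if (m : ℕ) + 1 = ∑ k ∈ Finset.univ.filter (fun k => k ≤ i), p k then 1 else 0

open Finset Matrix

theorem Matrix.eq_zero_of_anticomm_of_mulVec_single {ι R : Type*} [Fintype ι] [DecidableEq ι]
    [Preorder ι] [WellFoundedGT ι] [Ring R] {z e : Matrix ι ι R} (hz : z * e + e * z = 0)
    (hcol : ∀ j, z *ᵥ Pi.single j 1 = 0 ∨ ∃ j' > j, e *ᵥ Pi.single j' 1 = Pi.single j 1) :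
    z = 0 := by
  have hze : z * e = -(e * z) := eq_neg_of_add_eq_zero_left hz
  have hzero : ∀ j, z *ᵥ Pi.single j 1 = 0 := by
    intro j
    induction j using WellFoundedGT.induction with
    | _ j ih =>
      rcases hcol j with hj | ⟨j', hjj', hshift⟩
      · exact hj
      · rw [← hshift, mulVec_mulVec, hze, neg_mulVec, ← mulVec_mulVec, ih j' hjj',
          mulVec_zero, neg_zero]
  ext i j
  simpa using congrFun (hzero j) i

section JordanMatrix

variable {n N : ℕ} (p : Fin n → ℕ)

theorem lastVec_eq_single {i : Fin n} {j : Fin N}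
    (hj : (j : ℕ) + 1 = ∑ k ∈ univ.filter (· ≤ i), p k) :
    lastVec n N p i = Pi.single j 1 := by
  funext m
  simp only [lastVec, Pi.single_apply, ← hj, Nat.add_right_cancel_iff, Fin.ext_iff]

theorem jordanMatrix_mulVec_single {j j' : Fin N} (hj' : (j' : ℕ) = j + 1)
    (hstart : ∀ m : Fin n, (j' : ℕ) ≠ ∑ k ∈ univ.filter (· < m), p k) :
    jordanMatrix n N p *ᵥ Pi.single j' 1 = Pi.single j 1 := by
  funext i
  rw [mulVec_single_one, col_apply]
  simp only [jordanMatrix, of_apply, Pi.single_apply, Fin.ext_iff]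
  by_cases hij : (i : ℕ) = j
  · rw [if_pos ⟨by omega, hstart⟩, if_pos hij]
  · rw [if_neg (fun h => hij (by omega)), if_neg hij]

theorem sum_filter_lt_succ {n : ℕ} (p : Fin (n + 1) → ℕ) (i : Fin n) :
    ∑ k ∈ univ.filter (· < i.succ), p k = ∑ k ∈ univ.filter (· ≤ i.castSucc), p k := by
  simp only [Fin.le_castSucc_iff]

theorem sum_filter_le_last {n : ℕ} (p : Fin (n + 1) → ℕ) :
    ∑ k ∈ univ.filter (· ≤ Fin.last n), p k = ∑ k, p k := by
  simp only [Fin.le_last, filter_true]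

/-- Each position `j + 1` (1-based) either ends a block, or lies inside `Fin N` and starts none. -/
theorem exists_blockEnd_or_not_blockStart (hsum : ∑ i, p i = N) (j : Fin N) :
    (∃ i, (j : ℕ) + 1 = ∑ k ∈ univ.filter (· ≤ i), p k) ∨
      ∃ j' : Fin N, (j' : ℕ) = j + 1 ∧ ∀ m : Fin n, (j' : ℕ) ≠ ∑ k ∈ univ.filter (· < m), p k := by
  rcases n with _ | n
  · simp only [univ_eq_empty, sum_empty] at hsum
    exact absurd hsum (Fin.pos j).ne
  by_cases hend : ∃ i, (j : ℕ) + 1 = ∑ k ∈ univ.filter (· ≤ i), p k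
  · exact Or.inl hend
  push Not at hend
  have hlt : (j : ℕ) + 1 < N := by
    have := hend (Fin.last n)
    rw [sum_filter_le_last, hsum] at this
    omega
  refine Or.inr ⟨⟨j + 1, hlt⟩, rfl, fun m => ?_⟩
  cases m using Fin.cases with
  | zero => simp
  | succ i => rw [sum_filter_lt_succ]; exact hend i.castSucc

end JordanMatrix

theorem stmt4_general (n N : ℕ) (p : Fin n → ℕ)
    (hsum : ∑ i, p i = N)
    (z : Matrix (Fin N) (Fin N) ℂ)
    (hz : z * jordanMatrix n N p + jordanMatrix n N p * z = 0)
    (hv : ∀ i : Fin n, z.mulVec (lastVec n N p i) = 0) :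
    z = 0 := by
  refine Matrix.eq_zero_of_anticomm_of_mulVec_single hz fun j => ?_
  rcases exists_blockEnd_or_not_blockStart p hsum j with ⟨i, hi⟩ | ⟨j', hj', hstart⟩
  · exact Or.inl (lastVec_eq_single p hi ▸ hv i)
  · exact Or.inr ⟨j', Fin.lt_def.2 (by omega), jordanMatrix_mulVec_single p hj' hstart⟩

/-- If `z ∈ M_N(ℂ)` satisfies `ze + ez = 0` and `z v_{t_i} = 0` for all
`i = 1, ..., n`, then `z = 0`; a matrix anticommuting with `e` is determined by its values
on the last basis vector of each Jordan block. -/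
theorem stmt4 (n N : ℕ) (hN : 1 ≤ N) (p : Fin n → ℕ)
    (hpos : ∀ i, 1 ≤ p i) (hmono : Monotone p) (hsum : ∑ i, p i = N)
    (z : Matrix (Fin N) (Fin N) ℂ)
    (hz : z * jordanMatrix n N p + jordanMatrix n N p * z = 0)
    (hv : ∀ i : Fin n, z.mulVec (lastVec n N p i) = 0) :
    z = 0 :=
  stmt4_general n N p hsum z hz hv
end

section
/- For all 1 ≤ i, j ≤ n and every integer k with max(0, p_j − p_i) ≤ k ≤ p_j − 1, there exists a unique matrix ẑ_{j,i;k} ∈ M_N(ℂ) such that ẑ_{j,i;k} e + e ẑ_{j,i;k} = 0, ẑ_{j,i;k}(v_{t_i}) = e^k v_{t_j}, and ẑ_{j,i;k}(v_{t_{i'}}) = 0 for all i' ≠ i. Moreover, the Σ_{i,j} min(p_i, p_j) matrices ẑ_{j,i;k} so obtained are linearly independent and form a basis of the anticommutant {z ∈ M_N(ℂ) : ze + ez = 0}. -/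
namespace Stmt5Aux

open Finset

variable (n : ℕ) (p : Fin n → ℕ)

def pext (k : ℕ) : ℕ := if h : k < n then p ⟨k, h⟩ else 0

def Snat (m : ℕ) : ℕ := ∑ k ∈ Finset.range m, pext n p k

def blkN (a : ℕ) : ℕ := Nat.findGreatest (fun m => Snat n p m ≤ a) n

def isStart (c : ℕ) : Prop := ∃ m : Fin n, c = Snat n p ↑m

instance (c : ℕ) : Decidable (isStart n p c) := by unfold isStart; infer_instance

lemma pext_coe (k : Fin n) : pext n p ↑k = p k := by
  simp [pext, k.isLt]

lemma Snat_succ (m : ℕ) : Snat n p (m + 1) = Snat n p m + pext n p m :=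
  Finset.sum_range_succ _ _

lemma Snat_zero : Snat n p 0 = 0 := by simp [Snat]

lemma Snat_mono : Monotone (Snat n p) := fun x y h =>
  Finset.sum_le_sum_of_subset (Finset.range_subset_range.2 h)

lemma Snat_step (hpos : ∀ i, 1 ≤ p i) {m : ℕ} (hm : m < n) :
    Snat n p m + p ⟨m, hm⟩ = Snat n p (m + 1) := by
  rw [Snat_succ]
  congr 1
  simp [pext, hm]

lemma Snat_filter_lt {m : ℕ} (hm : m ≤ n) :
    ∑ k ∈ Finset.univ.filter (fun k : Fin n => (k : ℕ) < m), p k = Snat n p m := by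
  rw [Finset.sum_filter]
  have h1 : ∀ k : Fin n, (if (k : ℕ) < m then p k else 0)
      = (fun j => if j < m then pext n p j else 0) (k : ℕ) := by
    intro k; simp only [pext_coe]
  calc ∑ k : Fin n, (if (k : ℕ) < m then p k else 0)
      = ∑ k : Fin n, (fun j => if j < m then pext n p j else 0) (k : ℕ) :=
        Finset.sum_congr rfl (fun k _ => h1 k)
    _ = ∑ k ∈ Finset.range n, (if k < m then pext n p k else 0) :=
        Fin.sum_univ_eq_sum_range (fun j => if j < m then pext n p j else 0) n
    _ = ∑ k ∈ Finset.range m, (if k < m then pext n p k else 0) := by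
        refine (Finset.sum_subset (Finset.range_subset_range.2 hm) ?_).symm
        intro x _ hx
        rw [Finset.mem_range] at hx
        rw [if_neg (by omega)]
    _ = Snat n p m := by
        refine Finset.sum_congr rfl ?_
        intro x hx
        rw [Finset.mem_range] at hx
        rw [if_pos hx]

lemma Snat_top (N : ℕ) (hsum : ∑ i, p i = N) : Snat n p n = N := by
  rw [← hsum, Snat]
  rw [← Fin.sum_univ_eq_sum_range (fun k => pext n p k) n]
  exact Finset.sum_congr rfl (fun k _ => pext_coe n p k)

section Spec

variable {n p}

lemma blk_spec {a : ℕ} (ha : a < Snat n p n) :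
    blkN n p a < n ∧ Snat n p (blkN n p a) ≤ a ∧ a < Snat n p (blkN n p a + 1) := by
  have h0 : Snat n p 0 ≤ a := by rw [Snat_zero]; omega
  have hfg : Snat n p (blkN n p a) ≤ a :=
    Nat.findGreatest_spec (P := fun m => Snat n p m ≤ a) (m := 0) (Nat.zero_le n) h0
  have hle : blkN n p a ≤ n := Nat.findGreatest_le n
  have hlt : blkN n p a < n := by
    rcases lt_or_eq_of_le hle with h | h
    · exact h
    · exfalso; rw [h] at hfg; omega
  refine ⟨hlt, hfg, ?_⟩
  by_contra h
  push_neg at h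
  exact Nat.findGreatest_is_greatest (P := fun m => Snat n p m ≤ a)
    (Nat.lt_succ_self _) hlt h

lemma blk_eq {a m : ℕ} (ha : a < Snat n p n) (h1 : Snat n p m ≤ a)
    (h2 : a < Snat n p (m + 1)) : blkN n p a = m := by
  obtain ⟨hlt, hb1, hb2⟩ := blk_spec ha
  by_contra h
  rcases Nat.lt_or_ge (blkN n p a) m with hc | hc
  · have : Snat n p (blkN n p a + 1) ≤ Snat n p m := Snat_mono n p (by omega)
    omega
  · have hc' : m < blkN n p a := by omega
    have : Snat n p (m + 1) ≤ Snat n p (blkN n p a) := Snat_mono n p (by omega)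
    omega

lemma isStart_iff (hpos : ∀ i, 1 ≤ p i) {a : ℕ} (ha : a < Snat n p n) :
    isStart n p a ↔ a = Snat n p (blkN n p a) := by
  constructor
  · rintro ⟨m, rfl⟩
    have hm : (m : ℕ) < n := m.isLt
    have hstep := Snat_step n p hpos hm
    have h1 := hpos m
    rw [blk_eq ha le_rfl (by simp only [Fin.eta] at hstep; omega)]
  · intro h
    obtain ⟨hlt, _, _⟩ := blk_spec ha
    exact ⟨⟨blkN n p a, hlt⟩, h⟩

lemma zero_isStart (hn : 0 < n) : isStart n p 0 :=
  ⟨⟨0, hn⟩, by rw [Snat_zero]⟩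

end Spec

section Matrices

variable {n N : ℕ} {p : Fin n → ℕ}

lemma jordan_apply (a b : Fin N) :
    jordanMatrix n N p a b = if ((b : ℕ) = (a : ℕ) + 1 ∧ ¬ isStart n p ↑b) then 1 else 0 := by
  unfold jordanMatrix
  rw [Matrix.of_apply]
  have hiff : (∀ m : Fin n, (b : ℕ) ≠ ∑ k ∈ Finset.univ.filter (fun k => k < m), p k)
      ↔ ¬ isStart n p ↑b := by
    rw [isStart, not_exists]
    apply forall_congr'
    intro m
    have hfilter : (Finset.univ.filter (fun k : Fin n => k < m))
        = (Finset.univ.filter (fun k : Fin n => (k : ℕ) < (m : ℕ))) :=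
      Finset.filter_congr (fun k _ => Fin.lt_def)
    rw [hfilter, Snat_filter_lt n p (le_of_lt m.isLt)]
  rw [if_congr (and_congr_right (fun _ => hiff)) rfl rfl]

lemma lastVec_eq (i : Fin n) (m : Fin N) :
    lastVec n N p i m = if (m : ℕ) + 1 = Snat n p (↑i + 1) then 1 else 0 := by
  unfold lastVec
  have hfilter : (Finset.univ.filter (fun k : Fin n => k ≤ i))
      = (Finset.univ.filter (fun k : Fin n => (k : ℕ) < (i : ℕ) + 1)) :=
    Finset.filter_congr (fun k _ => by rw [Fin.le_def]; omega)
  rw [hfilter, Snat_filter_lt n p (by omega : (i : ℕ) + 1 ≤ n)]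

lemma mulVec_lastVec (z : Matrix (Fin N) (Fin N) ℂ) (i : Fin n) (b : Fin N)
    (hb : (b : ℕ) + 1 = Snat n p (↑i + 1)) (a : Fin N) :
    z.mulVec (lastVec n N p i) a = z a b := by
  simp only [Matrix.mulVec, dotProduct]
  rw [Finset.sum_eq_single b]
  · rw [lastVec_eq, if_pos hb, mul_one]
  · intro c _ hc
    rw [lastVec_eq, if_neg, mul_zero]
    intro h
    exact hc (Fin.ext (by omega))
  · intro h; exact absurd (Finset.mem_univ b) h

lemma mulE_of_start (z : Matrix (Fin N) (Fin N) ℂ) (a b : Fin N) (hb : isStart n p ↑b) :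
    (z * jordanMatrix n N p) a b = 0 := by
  rw [Matrix.mul_apply]
  apply Finset.sum_eq_zero
  intro c _
  rw [jordan_apply, if_neg (fun h => h.2 hb), mul_zero]

lemma mulE_of_step (z : Matrix (Fin N) (Fin N) ℂ) (a b b' : Fin N)
    (hb : (b : ℕ) = (b' : ℕ) + 1) (h2 : ¬ isStart n p ↑b) :
    (z * jordanMatrix n N p) a b = z a b' := by
  rw [Matrix.mul_apply]
  rw [Finset.sum_eq_single b']
  · rw [jordan_apply, if_pos ⟨hb, h2⟩, mul_one]
  · intro c _ hc
    rw [jordan_apply, if_neg, mul_zero]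
    rintro ⟨h, -⟩
    exact hc (Fin.ext (by omega))
  · intro h; exact absurd (Finset.mem_univ b') h

lemma Emul_of_end (z : Matrix (Fin N) (Fin N) ℂ) (a b : Fin N)
    (ha : ∀ c : Fin N, (c : ℕ) = (a : ℕ) + 1 → isStart n p ↑c) :
    (jordanMatrix n N p * z) a b = 0 := by
  rw [Matrix.mul_apply]
  apply Finset.sum_eq_zero
  intro c _
  rw [jordan_apply, if_neg, zero_mul]
  rintro ⟨h1, h2⟩
  exact h2 (ha c h1)

lemma Emul_of_step (z : Matrix (Fin N) (Fin N) ℂ) (a b a' : Fin N)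
    (ha : (a' : ℕ) = (a : ℕ) + 1) (h2 : ¬ isStart n p ↑a') :
    (jordanMatrix n N p * z) a b = z a' b := by
  rw [Matrix.mul_apply]
  rw [Finset.sum_eq_single a']
  · rw [jordan_apply, if_pos ⟨ha, h2⟩, one_mul]
  · intro c _ hc
    rw [jordan_apply, if_neg, zero_mul]
    rintro ⟨h, -⟩
    exact hc (Fin.ext (by omega))
  · intro h; exact absurd (Finset.mem_univ a') h

end Matrices

def zhat (n N : ℕ) (p : Fin n → ℕ) (j i : Fin n) (k : ℕ) : Matrix (Fin N) (Fin N) ℂ :=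
  Matrix.of fun a b =>
    if blkN n p ↑b = ↑i ∧ (a : ℕ) + k + (Snat n p (↑i + 1) - 1 - ↑b) = Snat n p (↑j + 1) - 1
        ∧ k + (Snat n p (↑i + 1) - 1 - (b : ℕ)) ≤ p j - 1
    then (-1 : ℂ) ^ (Snat n p (↑i + 1) - 1 - (b : ℕ)) else 0

section Main

variable {n N : ℕ} {p : Fin n → ℕ}

lemma epow_apply (hpos : ∀ i, 1 ≤ p i) (hNS : Snat n p n = N) (j : Fin n) :
    ∀ k, k ≤ p j - 1 → ∀ a : Fin N,
      ((jordanMatrix n N p) ^ k).mulVec (lastVec n N p j) a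
        = if (a : ℕ) + k = Snat n p (↑j + 1) - 1 then 1 else 0 := by
  have hstep : Snat n p ↑j + p j = Snat n p (↑j + 1) := by
    have := Snat_step n p hpos j.isLt
    simpa using this
  have hSj : Snat n p (↑j + 1) ≤ N := by
    rw [← hNS]; exact Snat_mono n p j.isLt
  have hpj := hpos j
  intro k
  induction k with
  | zero =>
    intro _ a
    rw [pow_zero, Matrix.one_mulVec, lastVec_eq]
    exact if_congr (by omega) rfl rfl
  | succ k ih =>
    intro hk a
    have ihk := ih (by omega)
    rw [pow_succ', ← Matrix.mulVec_mulVec]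
    set w := ((jordanMatrix n N p) ^ k).mulVec (lastVec n N p j) with hw
    simp only [Matrix.mulVec, dotProduct]
    by_cases hcase : (a : ℕ) + (k + 1) = Snat n p (↑j + 1) - 1
    · have hbound : (a : ℕ) + 1 < N := by omega
      set c1 : Fin N := ⟨(a : ℕ) + 1, hbound⟩ with hc1def
      have hvc1 : (c1 : ℕ) = (a : ℕ) + 1 := rfl
      rw [Finset.sum_eq_single c1]
      · have hns : ¬ isStart n p ↑c1 := by
          rw [hvc1]
          intro hs
          have hlt : (a : ℕ) + 1 < Snat n p n := by omega
          rw [isStart_iff hpos hlt] at hs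
          have hblk : blkN n p ((a : ℕ) + 1) = ↑j := blk_eq (by omega) (by omega) (by omega)
          rw [hblk] at hs
          omega
        rw [jordan_apply, if_pos ⟨hvc1, hns⟩, one_mul, ihk, if_pos (by omega), if_pos hcase]
      · intro c _ hc
        rw [jordan_apply, if_neg, zero_mul]
        rintro ⟨h1, -⟩
        exact hc (Fin.ext (by omega))
      · intro h; exact absurd (Finset.mem_univ _) h
    · rw [if_neg hcase]
      apply Finset.sum_eq_zero
      intro c _
      rw [jordan_apply, ihk]
      by_cases h1 : (c : ℕ) = (a : ℕ) + 1 ∧ ¬ isStart n p ↑c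
      · rw [if_pos h1, if_neg (by omega), mul_zero]
      · rw [if_neg h1, zero_mul]

lemma zhat_col (hpos : ∀ i, 1 ≤ p i) (hNS : Snat n p n = N) (j i i' : Fin n) (k : ℕ)
    (a b : Fin N) (hb : (b : ℕ) + 1 = Snat n p (↑i' + 1)) :
    zhat n N p j i k a b
      = if (i' = i ∧ (a : ℕ) + k = Snat n p (↑j + 1) - 1 ∧ k ≤ p j - 1) then 1 else 0 := by
  have hstep : Snat n p ↑i' + p i' = Snat n p (↑i' + 1) := by
    have := Snat_step n p hpos i'.isLt
    simpa using this
  have hpi' := hpos i'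
  have hbN : (b : ℕ) < N := b.isLt
  have hblk : blkN n p ↑b = ↑i' := blk_eq (by omega) (by omega) (by omega)
  by_cases h : i' = i
  · subst h
    have hd : Snat n p (↑i' + 1) - 1 - (b : ℕ) = 0 := by omega
    unfold zhat
    rw [Matrix.of_apply, hd]
    simp only [Nat.add_zero, pow_zero, hblk]
  · unfold zhat
    have hn1 : ¬ (blkN n p ↑b = ↑i ∧ (a : ℕ) + k + (Snat n p (↑i + 1) - 1 - ↑b)
        = Snat n p (↑j + 1) - 1 ∧ k + (Snat n p (↑i + 1) - 1 - (b : ℕ)) ≤ p j - 1) := by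
      rintro ⟨h1, -⟩
      exact h (Fin.ext (by omega))
    have hn2 : ¬ (i' = i ∧ (a : ℕ) + k = Snat n p (↑j + 1) - 1 ∧ k ≤ p j - 1) := by
      rintro ⟨h1, -⟩; exact h h1
    rw [Matrix.of_apply, if_neg hn1, if_neg hn2]

lemma zhat_anticomm (hn : 0 < n) (hpos : ∀ i, 1 ≤ p i) (hNS : Snat n p n = N)
    (j i : Fin n) (k : ℕ) (hk1 : p j - p i ≤ k) :
    zhat n N p j i k * jordanMatrix n N p + jordanMatrix n N p * zhat n N p j i k = 0 := by
  have hstepi : Snat n p ↑i + p i = Snat n p (↑i + 1) := by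
    have := Snat_step n p hpos i.isLt; simpa using this
  have hstepj : Snat n p ↑j + p j = Snat n p (↑j + 1) := by
    have := Snat_step n p hpos j.isLt; simpa using this
  have hSi : Snat n p (↑i + 1) ≤ N := by rw [← hNS]; exact Snat_mono n p i.isLt
  have hSj : Snat n p (↑j + 1) ≤ N := by rw [← hNS]; exact Snat_mono n p j.isLt
  have hpi := hpos i
  have hpj := hpos j
  ext a b
  rw [Matrix.add_apply, Matrix.zero_apply]
  have hbN : (b : ℕ) < N := b.isLt
  have haN : (a : ℕ) < N := a.isLt
  have hbS : (b : ℕ) < Snat n p n := by omega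
  by_cases hbs : isStart n p ↑b
  · rw [mulE_of_start _ _ _ hbs, zero_add]
    by_cases hae : ∀ c : Fin N, (c : ℕ) = (a : ℕ) + 1 → isStart n p ↑c
    · rw [Emul_of_end _ _ _ hae]
    · push_neg at hae
      obtain ⟨a', ha', hans⟩ := hae
      rw [Emul_of_step _ _ _ a' ha' hans]
      unfold zhat
      rw [Matrix.of_apply, if_neg]
      rintro ⟨h1, h2, h3⟩
      have hblkb := (isStart_iff hpos hbS).mp hbs
      rw [h1] at hblkb
      exact hans ⟨j, by omega⟩
  · have hb0 : (b : ℕ) ≠ 0 := fun h => hbs (by rw [h]; exact zero_isStart hn)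
    obtain ⟨hblt, hbge, hblt2⟩ := blk_spec hbS
    have hbgt : Snat n p (blkN n p ↑b) < ↑b :=
      lt_of_le_of_ne hbge (fun h => hbs ((isStart_iff hpos hbS).mpr h.symm))
    have hb'N : (b : ℕ) - 1 < N := by omega
    set b' : Fin N := ⟨(b : ℕ) - 1, hb'N⟩ with hb'def
    have hvb' : (b' : ℕ) = (b : ℕ) - 1 := rfl
    have hb'1 : (b : ℕ) = (b' : ℕ) + 1 := by omega
    have hblkb' : blkN n p ↑b' = blkN n p ↑b := blk_eq (by omega) (by omega) (by omega)
    rw [mulE_of_step _ a b b' hb'1 hbs]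
    by_cases hae : ∀ c : Fin N, (c : ℕ) = (a : ℕ) + 1 → isStart n p ↑c
    · rw [Emul_of_end _ _ _ hae, add_zero]
      unfold zhat
      rw [Matrix.of_apply, if_neg]
      rintro ⟨h1, h2, h3⟩
      rw [hblkb'] at h1
      have hq : Snat n p (blkN n p ↑b + 1) = Snat n p (↑i + 1) := by rw [h1]
      have haS2 : Snat n p ↑j ≤ (a : ℕ) ∧ (a : ℕ) + 1 < Snat n p (↑j + 1) := by omega
      have hst := hae ⟨(a : ℕ) + 1, by omega⟩ rfl
      have hltS : ((a : ℕ) + 1) < Snat n p n := by omega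
      rw [isStart_iff hpos hltS] at hst
      have hblka : blkN n p ((a : ℕ) + 1) = ↑j := blk_eq (by omega) (by omega) (by omega)
      rw [hblka] at hst
      omega
    · push_neg at hae
      obtain ⟨a', ha', hans⟩ := hae
      rw [Emul_of_step _ a b a' ha' hans]
      unfold zhat
      rw [Matrix.of_apply, Matrix.of_apply]
      by_cases hC : blkN n p ↑b = ↑i
          ∧ (a' : ℕ) + k + (Snat n p (↑i + 1) - 1 - ↑b) = Snat n p (↑j + 1) - 1
          ∧ k + (Snat n p (↑i + 1) - 1 - (b : ℕ)) ≤ p j - 1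
      · obtain ⟨h1, h2, h3⟩ := hC
        have hq : Snat n p (blkN n p ↑b + 1) = Snat n p (↑i + 1) := by rw [h1]
        have hble : (b : ℕ) ≤ Snat n p (↑i + 1) - 1 := by omega
        have hknd : k + (Snat n p (↑i + 1) - 1 - (b : ℕ)) + 1 ≤ p j - 1 := by
          by_contra hcon
          exact hans ⟨j, by omega⟩
        have hC1 : blkN n p ↑b' = ↑i
            ∧ (a : ℕ) + k + (Snat n p (↑i + 1) - 1 - ↑b') = Snat n p (↑j + 1) - 1
            ∧ k + (Snat n p (↑i + 1) - 1 - (b' : ℕ)) ≤ p j - 1 := by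
          refine ⟨by rw [hblkb']; exact h1, by omega, by omega⟩
        have hexp : Snat n p (↑i + 1) - 1 - (b' : ℕ) = (Snat n p (↑i + 1) - 1 - (b : ℕ)) + 1 := by
          omega
        rw [if_pos hC1, if_pos ⟨h1, h2, h3⟩, hexp, pow_succ]
        ring
      · have hC1neg : ¬ (blkN n p ↑b' = ↑i
            ∧ (a : ℕ) + k + (Snat n p (↑i + 1) - 1 - ↑b') = Snat n p (↑j + 1) - 1
            ∧ k + (Snat n p (↑i + 1) - 1 - (b' : ℕ)) ≤ p j - 1) := by
          rintro ⟨h1, h2, h3⟩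
          apply hC
          rw [hblkb'] at h1
          have hq : Snat n p (blkN n p ↑b + 1) = Snat n p (↑i + 1) := by rw [h1]
          exact ⟨h1, by omega, by omega⟩
        rw [if_neg hC1neg, if_neg hC, add_zero]

lemma determin (hpos : ∀ i, 1 ≤ p i) (hNS : Snat n p n = N) (z : Matrix (Fin N) (Fin N) ℂ)
    (hz : z * jordanMatrix n N p + jordanMatrix n N p * z = 0)
    (hcol : ∀ (i : Fin n) (b : Fin N), (b : ℕ) + 1 = Snat n p (↑i + 1) → ∀ a, z a b = 0) :
    z = 0 := by
  have hrel : ∀ a b : Fin N, (z * jordanMatrix n N p) a b + (jordanMatrix n N p * z) a b = 0 := by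
    intro a b
    have := congrFun (congrFun hz a) b
    simpa using this
  suffices h : ∀ d (a b : Fin N), Snat n p (blkN n p ↑b + 1) - 1 - ↑b = d → z a b = 0 by
    ext a b; exact h _ a b rfl
  intro d
  induction d with
  | zero =>
    intro a b hb
    have hbS : (b : ℕ) < Snat n p n := by have := b.isLt; omega
    obtain ⟨hlt, h1, h2⟩ := blk_spec hbS
    refine hcol ⟨blkN n p ↑b, hlt⟩ b ?_ a
    show (b : ℕ) + 1 = Snat n p (blkN n p ↑b + 1)
    omega
  | succ d ih =>
    intro a b hb
    have hbS : (b : ℕ) < Snat n p n := by have := b.isLt; omega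
    obtain ⟨hlt, h1, h2⟩ := blk_spec hbS
    have hbN : (b : ℕ) + 1 < N := by
      have := Snat_mono n p (show blkN n p ↑b + 1 ≤ n from hlt)
      omega
    set c : Fin N := ⟨(b : ℕ) + 1, hbN⟩ with hcdef
    have hcval : (c : ℕ) = (b : ℕ) + 1 := rfl
    have hcblk : blkN n p ↑c = blkN n p ↑b := blk_eq (by omega) (by omega) (by omega)
    have hcns : ¬ isStart n p ↑c := by
      rw [isStart_iff hpos (by omega), hcblk]
      omega
    have h := hrel a c
    rw [mulE_of_step z a c b (by omega) hcns] at h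
    by_cases hae : ∀ c' : Fin N, (c' : ℕ) = (a : ℕ) + 1 → isStart n p ↑c'
    · rw [Emul_of_end _ _ _ hae] at h
      simpa using h
    · push_neg at hae
      obtain ⟨a', ha', hans⟩ := hae
      rw [Emul_of_step z a c a' ha' hans] at h
      rw [ih a' c (by rw [hcblk]; omega)] at h
      simpa using h

lemma col_ker (hpos : ∀ i, 1 ≤ p i) (hNS : Snat n p n = N) (z : Matrix (Fin N) (Fin N) ℂ)
    (hz : z * jordanMatrix n N p + jordanMatrix n N p * z = 0) (i : Fin n) (b : Fin N)
    (hb : (b : ℕ) + 1 = Snat n p (↑i + 1)) (a : Fin N)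
    (ha : p i ≤ (a : ℕ) - Snat n p (blkN n p ↑a)) : z a b = 0 := by
  have hrel : ∀ a b : Fin N, (z * jordanMatrix n N p) a b + (jordanMatrix n N p * z) a b = 0 := by
    intro a b
    have := congrFun (congrFun hz a) b
    simpa using this
  have haS : (a : ℕ) < Snat n p n := by have := a.isLt; omega
  have hbNlt : (b : ℕ) < N := b.isLt
  obtain ⟨hβlt, hβ1, hβ2⟩ := blk_spec haS
  have hstepi : Snat n p ↑i + p i = Snat n p (↑i + 1) := by
    have := Snat_step n p hpos i.isLt; simpa using this
  have hpi := hpos i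
  have hchain : ∀ r, r ≤ p i - 1 → ∀ (ar br : Fin N), (ar : ℕ) = (a : ℕ) - r →
      (br : ℕ) = (b : ℕ) - r → z ar br = (-1 : ℂ) ^ r * z a b := by
    intro r
    induction r with
    | zero =>
      intro _ ar br har hbr
      have h1 : ar = a := Fin.ext (by omega)
      have h2 : br = b := Fin.ext (by omega)
      rw [h1, h2, pow_zero, one_mul]
    | succ r ih =>
      intro hr ar br har hbr
      have hbrN : (b : ℕ) - r < N := by omega
      have harN : (a : ℕ) - r < N := by omega
      set br' : Fin N := ⟨(b : ℕ) - r, hbrN⟩ with hbr'def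
      set ar' : Fin N := ⟨(a : ℕ) - r, harN⟩ with har'def
      have hvbr' : (br' : ℕ) = (b : ℕ) - r := rfl
      have hvar' : (ar' : ℕ) = (a : ℕ) - r := rfl
      have hprev := ih (by omega) ar' br' rfl rfl
      have hbr'blk : blkN n p ((b : ℕ) - r) = ↑i := blk_eq (by omega) (by omega) (by omega)
      have hbr'ns : ¬ isStart n p ↑br' := by
        rw [isStart_iff hpos (by omega)]
        show ¬ ((b : ℕ) - r = Snat n p (blkN n p ((b : ℕ) - r)))
        rw [hbr'blk]
        omega
      have har'blk : blkN n p ((a : ℕ) - r) = blkN n p ↑a := blk_eq (by omega) (by omega) (by omega)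
      have har'ns : ¬ isStart n p ↑ar' := by
        rw [isStart_iff hpos (by omega)]
        show ¬ ((a : ℕ) - r = Snat n p (blkN n p ((a : ℕ) - r)))
        rw [har'blk]
        omega
      have h := hrel ar br'
      rw [mulE_of_step z ar br' br (by omega) hbr'ns] at h
      rw [Emul_of_step z ar br' ar' (by omega) har'ns] at h
      rw [hprev] at h
      have h2 : z ar br = -((-1 : ℂ) ^ r * z a b) := eq_neg_of_add_eq_zero_left h
      rw [h2, pow_succ]
      ring
  have ha0N : (a : ℕ) - (p i - 1) < N := by omega
  have hb0N : (b : ℕ) - (p i - 1) < N := by omega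
  set a0 : Fin N := ⟨(a : ℕ) - (p i - 1), ha0N⟩ with ha0def
  set b0 : Fin N := ⟨(b : ℕ) - (p i - 1), hb0N⟩ with hb0def
  have hva0 : (a0 : ℕ) = (a : ℕ) - (p i - 1) := rfl
  have hvb0 : (b0 : ℕ) = (b : ℕ) - (p i - 1) := rfl
  have hfin := hchain (p i - 1) le_rfl a0 b0 rfl rfl
  have hb0start : isStart n p ↑b0 := ⟨i, by show (b : ℕ) - (p i - 1) = Snat n p ↑i; omega⟩
  have ha0blk : blkN n p ((a : ℕ) - (p i - 1)) = blkN n p ↑a :=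
    blk_eq (by omega) (by omega) (by omega)
  have ha0ns : ¬ isStart n p ↑a0 := by
    rw [isStart_iff hpos (by omega)]
    show ¬ ((a : ℕ) - (p i - 1) = Snat n p (blkN n p ((a : ℕ) - (p i - 1))))
    rw [ha0blk]
    omega
  have ha0pos : 1 ≤ (a0 : ℕ) := by omega
  have ha0m : (a0 : ℕ) - 1 < N := by omega
  set am : Fin N := ⟨(a0 : ℕ) - 1, ha0m⟩ with hamdef
  have hvam : (am : ℕ) = (a0 : ℕ) - 1 := rfl
  have h := hrel am b0
  rw [mulE_of_start _ _ _ hb0start] at h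
  rw [Emul_of_step z am b0 a0 (by omega) ha0ns] at h
  have h0 : z a0 b0 = 0 := by simpa using h
  rw [h0] at hfin
  have hne : ((-1 : ℂ)) ^ (p i - 1) ≠ 0 := pow_ne_zero _ (by norm_num)
  rcases mul_eq_zero.mp hfin.symm with hc | hc
  · exact absurd hc hne
  · exact hc

lemma endIdx (hpos : ∀ i, 1 ≤ p i) (hNS : Snat n p n = N) (i' : Fin n) :
    ∃ b : Fin N, (b : ℕ) + 1 = Snat n p (↑i' + 1) := by
  have hstep : Snat n p ↑i' + p i' = Snat n p (↑i' + 1) := by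
    have := Snat_step n p hpos i'.isLt; simpa using this
  have hle : Snat n p (↑i' + 1) ≤ N := hNS ▸ Snat_mono n p i'.isLt
  have hp := hpos i'
  exact ⟨⟨Snat n p (↑i' + 1) - 1, by omega⟩,
    by show Snat n p (↑i' + 1) - 1 + 1 = _; omega⟩

lemma zhat_props (hn : 0 < n) (hpos : ∀ i, 1 ≤ p i) (hNS : Snat n p n = N)
    (i j : Fin n) (k : ℕ) (hk1 : p j - p i ≤ k) (hk2 : k ≤ p j - 1) :
    zhat n N p j i k * jordanMatrix n N p + jordanMatrix n N p * zhat n N p j i k = 0 ∧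
    (zhat n N p j i k).mulVec (lastVec n N p i)
      = ((jordanMatrix n N p) ^ k).mulVec (lastVec n N p j) ∧
    ∀ i' : Fin n, i' ≠ i → (zhat n N p j i k).mulVec (lastVec n N p i') = 0 := by
  refine ⟨zhat_anticomm hn hpos hNS j i k hk1, ?_, ?_⟩
  · funext a
    obtain ⟨b, hb⟩ := endIdx hpos hNS i
    rw [mulVec_lastVec _ i b hb a, zhat_col hpos hNS j i i k a b hb,
      epow_apply hpos hNS j k hk2 a]
    simp [hk2]
  · intro i' hi'
    funext a
    obtain ⟨b, hb⟩ := endIdx hpos hNS i'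
    rw [mulVec_lastVec _ i' b hb a, zhat_col hpos hNS j i i' k a b hb,
      if_neg (fun hc => hi' hc.1)]
    simp

lemma part1 (hn : 0 < n) (hpos : ∀ i, 1 ≤ p i) (hNS : Snat n p n = N)
    (i j : Fin n) (k : ℕ) (hk1 : p j - p i ≤ k) (hk2 : k ≤ p j - 1) :
    ∃! z : Matrix (Fin N) (Fin N) ℂ,
      z * jordanMatrix n N p + jordanMatrix n N p * z = 0 ∧
      z.mulVec (lastVec n N p i) = ((jordanMatrix n N p) ^ k).mulVec (lastVec n N p j) ∧
      ∀ i' : Fin n, i' ≠ i → z.mulVec (lastVec n N p i') = 0 := by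
  refine ⟨zhat n N p j i k, zhat_props hn hpos hNS i j k hk1 hk2, ?_⟩
  rintro z ⟨hz1, hz2, hz3⟩
  obtain ⟨hh1, hh2, hh3⟩ := zhat_props hn hpos hNS i j k hk1 hk2
  have hzz : z - zhat n N p j i k = 0 := by
    apply determin hpos hNS
    · calc (z - zhat n N p j i k) * jordanMatrix n N p
          + jordanMatrix n N p * (z - zhat n N p j i k)
          = (z * jordanMatrix n N p + jordanMatrix n N p * z)
            - (zhat n N p j i k * jordanMatrix n N p
              + jordanMatrix n N p * zhat n N p j i k) := by
            rw [sub_mul, mul_sub]; abel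
      _ = 0 := by rw [hz1, hh1, sub_zero]
    · intro i' b hb a
      rw [Matrix.sub_apply]
      by_cases hii : i' = i
      · subst hii
        have e1 : z a b = ((jordanMatrix n N p ^ k).mulVec (lastVec n N p j)) a := by
          rw [← mulVec_lastVec z i' b hb a, hz2]
        have e2 : zhat n N p j i' k a b
            = ((jordanMatrix n N p ^ k).mulVec (lastVec n N p j)) a := by
          rw [← mulVec_lastVec (zhat n N p j i' k) i' b hb a, hh2]
        rw [e1, e2, sub_self]
      · have e1 : z a b = 0 := by
          rw [← mulVec_lastVec z i' b hb a, hz3 i' hii]; simp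
        have e2 : zhat n N p j i k a b = 0 := by
          rw [← mulVec_lastVec (zhat n N p j i k) i' b hb a, hh3 i' hii]; simp
        rw [e1, e2, sub_self]
  exact sub_eq_zero.mp hzz

end Main

end Stmt5Aux

open Stmt5Aux

/-- For all `i, j` and every `k` with `max(0, p_j − p_i) ≤ k ≤ p_j − 1`,
there exists a unique matrix `ẑ_{j,i;k}` with `ẑe + eẑ = 0`, `ẑ v_{t_i} = e^k v_{t_j}`, and
`ẑ v_{t_{i'}} = 0` for `i' ≠ i`.  Moreover the `Σ_{i,j} min(p_i,p_j)` matrices so obtained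
are linearly independent and form a basis of the anticommutant `{z : ze + ez = 0}`. -/
theorem stmt5 (n N : ℕ) (hN : 1 ≤ N) (p : Fin n → ℕ)
    (hpos : ∀ i, 1 ≤ p i) (hmono : Monotone p) (hsum : ∑ i, p i = N) :
    (∀ i j : Fin n, ∀ k : ℕ, p j - p i ≤ k → k ≤ p j - 1 →
      ∃! z : Matrix (Fin N) (Fin N) ℂ,
        z * jordanMatrix n N p + jordanMatrix n N p * z = 0 ∧
        z.mulVec (lastVec n N p i) = ((jordanMatrix n N p) ^ k).mulVec (lastVec n N p j) ∧
        ∀ i' : Fin n, i' ≠ i → z.mulVec (lastVec n N p i') = 0) ∧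
    (∀ Z : Fin n → Fin n → ℕ → Matrix (Fin N) (Fin N) ℂ,
      (∀ i j : Fin n, ∀ k : ℕ, p j - p i ≤ k → k ≤ p j - 1 →
        Z i j k * jordanMatrix n N p + jordanMatrix n N p * Z i j k = 0 ∧
        (Z i j k).mulVec (lastVec n N p i) =
          ((jordanMatrix n N p) ^ k).mulVec (lastVec n N p j) ∧
        ∀ i' : Fin n, i' ≠ i → (Z i j k).mulVec (lastVec n N p i') = 0) →
      LinearIndependent ℂ
        (fun t : {t : Fin n × Fin n × ℕ // p t.2.1 - p t.1 ≤ t.2.2 ∧ t.2.2 ≤ p t.2.1 - 1} =>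
          Z t.1.1 t.1.2.1 t.1.2.2) ∧
      Submodule.span ℂ
        (Set.range
          (fun t : {t : Fin n × Fin n × ℕ // p t.2.1 - p t.1 ≤ t.2.2 ∧ t.2.2 ≤ p t.2.1 - 1} =>
            Z t.1.1 t.1.2.1 t.1.2.2)) =
        LinearMap.ker (LinearMap.mulLeft ℂ (jordanMatrix n N p)
          + LinearMap.mulRight ℂ (jordanMatrix n N p))) := by
  classical
  have hn : 0 < n := by
    by_contra h
    push_neg at h
    have hn0 : n = 0 := by omega
    subst hn0
    simp at hsum
    omega
  have hNS : Snat n p n = N := Snat_top n p N hsum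
  have hstep : ∀ m : Fin n, Snat n p ↑m + p m = Snat n p (↑m + 1) := by
    intro m; have := Snat_step n p hpos m.isLt; simpa using this
  have hSle : ∀ m : Fin n, Snat n p (↑m + 1) ≤ N := fun m => hNS ▸ Snat_mono n p m.isLt
  constructor
  · exact fun i j k hk1 hk2 => part1 hn hpos hNS i j k hk1 hk2
  · intro Z hZ
    have hZeq : ∀ (i j : Fin n) (k : ℕ), p j - p i ≤ k → k ≤ p j - 1 →
        Z i j k = zhat n N p j i k := by
      intro i j k h1 h2
      exact (part1 hn hpos hNS i j k h1 h2).unique (hZ i j k h1 h2)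
        (zhat_props hn hpos hNS i j k h1 h2)
    constructor
    · rw [linearIndependent_iff']
      intro s g hg t hts
      obtain ⟨⟨i, j, k⟩, ht⟩ := t
      have hk1 : p j - p i ≤ k := ht.1
      have hk2 : k ≤ p j - 1 := ht.2
      have hpj := hpos j
      have hpi := hpos i
      have hstepj := hstep j
      have hSj := hSle j
      have hstepi := hstep i
      have hSi := hSle i
      have hAlt : Snat n p (↑j + 1) - 1 - k < N := by omega
      have hBlt : Snat n p (↑i + 1) - 1 < N := by omega
      set A : Fin N := ⟨Snat n p (↑j + 1) - 1 - k, hAlt⟩ with hAdef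
      set B : Fin N := ⟨Snat n p (↑i + 1) - 1, hBlt⟩ with hBdef
      have hvA : (A : ℕ) = Snat n p (↑j + 1) - 1 - k := rfl
      have hvB : (B : ℕ) + 1 = Snat n p (↑i + 1) := by
        show Snat n p (↑i + 1) - 1 + 1 = _; omega
      have heval := congrFun (congrFun hg A) B
      simp only [Matrix.sum_apply, Matrix.smul_apply, smul_eq_mul, Matrix.zero_apply] at heval
      have hkey : ∑ t' ∈ s, g t' * (Z t'.1.1 t'.1.2.1 t'.1.2.2) A B
          = g ⟨(i, j, k), ht⟩ := by
        rw [Finset.sum_eq_single (⟨(i, j, k), ht⟩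
          : {t : Fin n × Fin n × ℕ // p t.2.1 - p t.1 ≤ t.2.2 ∧ t.2.2 ≤ p t.2.1 - 1})]
        · rw [hZeq i j k hk1 hk2, zhat_col hpos hNS j i i k A B hvB,
            if_pos ⟨rfl, by omega, hk2⟩, mul_one]
        · rintro ⟨⟨i', j', k'⟩, ht'⟩ _ hne
          rw [hZeq i' j' k' ht'.1 ht'.2, zhat_col hpos hNS j' i' i k' A B hvB]
          rw [if_neg, mul_zero]
          rintro ⟨h1, h2, h3⟩
          have hpj' := hpos j'
          have hstepj' := hstep j'
          have hSj' := hSle j'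
          have hblk1 : blkN n p ↑A = ↑j := blk_eq (by omega) (by omega) (by omega)
          have hblk2 : blkN n p ↑A = ↑j' := blk_eq (by omega) (by omega) (by omega)
          apply hne
          subst h1
          have hj : j' = j := Fin.ext (by omega)
          subst hj
          have hk : k' = k := by omega
          subst hk
          rfl
        · intro hnot
          exact absurd hts hnot
      rw [hkey] at heval
      exact heval
    · apply le_antisymm
      · rw [Submodule.span_le]
        rintro x ⟨t, rfl⟩
        obtain ⟨⟨i, j, k⟩, ht⟩ := t
        simp only [SetLike.mem_coe, LinearMap.mem_ker, LinearMap.add_apply,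
          LinearMap.mulLeft_apply, LinearMap.mulRight_apply]
        rw [hZeq i j k ht.1 ht.2, add_comm]
        exact zhat_anticomm hn hpos hNS j i k ht.1
      · intro z hz
        have hz' : z * jordanMatrix n N p + jordanMatrix n N p * z = 0 := by
          rw [LinearMap.mem_ker, LinearMap.add_apply, LinearMap.mulLeft_apply,
            LinearMap.mulRight_apply] at hz
          rw [add_comm]
          exact hz
        set F : Matrix (Fin N) (Fin N) ℂ :=
          ∑ i' : Fin n, ∑ j' : Fin n, ∑ k ∈ Finset.Icc (p j' - p i') (p j' - 1),
            z ⟨Snat n p (↑j' + 1) - 1 - k, by have := hSle j'; omega⟩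
              ⟨Snat n p (↑i' + 1) - 1, by have := hSle i'; have := hpos i'; omega⟩
              • zhat n N p j' i' k with hFdef
        have hFmem : F ∈ Submodule.span ℂ
            (Set.range (fun t : {t : Fin n × Fin n × ℕ //
                p t.2.1 - p t.1 ≤ t.2.2 ∧ t.2.2 ≤ p t.2.1 - 1} =>
              Z t.1.1 t.1.2.1 t.1.2.2)) := by
          apply Submodule.sum_mem
          intro i' _
          apply Submodule.sum_mem
          intro j' _
          apply Submodule.sum_mem
          intro k hk
          rw [Finset.mem_Icc] at hk
          apply Submodule.smul_mem
          apply Submodule.subset_span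
          exact ⟨⟨(i', j', k), hk⟩, hZeq i' j' k hk.1 hk.2⟩
        have hFK : F ∈ LinearMap.ker (LinearMap.mulLeft ℂ (jordanMatrix n N p)
            + LinearMap.mulRight ℂ (jordanMatrix n N p)) := by
          apply Submodule.sum_mem
          intro i' _
          apply Submodule.sum_mem
          intro j' _
          apply Submodule.sum_mem
          intro k hk
          rw [Finset.mem_Icc] at hk
          apply Submodule.smul_mem
          rw [LinearMap.mem_ker, LinearMap.add_apply, LinearMap.mulLeft_apply,
            LinearMap.mulRight_apply, add_comm]
          exact zhat_anticomm hn hpos hNS j' i' k hk.1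
        have hdK := Submodule.sub_mem _ hz hFK
        have hdanti : (z - F) * jordanMatrix n N p + jordanMatrix n N p * (z - F) = 0 := by
          rw [LinearMap.mem_ker, LinearMap.add_apply, LinearMap.mulLeft_apply,
            LinearMap.mulRight_apply] at hdK
          rw [add_comm]
          exact hdK
        have hdet : z - F = 0 := by
          apply determin hpos hNS _ hdanti
          intro i' b hb a
          rw [Matrix.sub_apply]
          have hstepi' := hstep i'
          have hSi' := hSle i'
          have hpi' := hpos i'
          have haN : (a : ℕ) < N := a.isLt
          have haS : (a : ℕ) < Snat n p n := by omega
          obtain ⟨hβlt, hβ1, hβ2⟩ := blk_spec haS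
          set β : Fin n := ⟨blkN n p ↑a, hβlt⟩ with hβdef
          have hvβ : (β : ℕ) = blkN n p ↑a := rfl
          have hstepβ := hstep β
          have hSβ := hSle β
          have hpβ := hpos β
          have hSnat1 : Snat n p ((β : ℕ) + 1) = Snat n p (blkN n p ↑a + 1) := rfl
          have hSnat2 : Snat n p (β : ℕ) = Snat n p (blkN n p ↑a) := rfl
          have hFab : F a b = ∑ i'' : Fin n, ∑ j' : Fin n,
              ∑ k ∈ Finset.Icc (p j' - p i'') (p j' - 1),
                z ⟨Snat n p (↑j' + 1) - 1 - k, by have := hSle j'; omega⟩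
                  ⟨Snat n p (↑i'' + 1) - 1, by have := hSle i''; have := hpos i''; omega⟩
                * (if (i' = i'' ∧ (a : ℕ) + k = Snat n p (↑j' + 1) - 1 ∧ k ≤ p j' - 1)
                    then 1 else 0) := by
            rw [hFdef]
            simp only [Matrix.sum_apply, Matrix.smul_apply, smul_eq_mul]
            refine Finset.sum_congr rfl ?_
            intro i'' _
            refine Finset.sum_congr rfl ?_
            intro j' _
            refine Finset.sum_congr rfl ?_
            intro k _
            rw [zhat_col hpos hNS j' i'' i' k a b hb]
          by_cases hq : (a : ℕ) - Snat n p (blkN n p ↑a) ≤ p i' - 1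
          · set k0 : ℕ := Snat n p ((β : ℕ) + 1) - 1 - (a : ℕ) with hk0def
            have hk0mem : k0 ∈ Finset.Icc (p β - p i') (p β - 1) := by
              rw [Finset.mem_Icc]
              constructor <;> omega
            have hFval : F a b = z a b := by
              rw [hFab]
              rw [Finset.sum_eq_single i']
              · rw [Finset.sum_eq_single β]
                · rw [Finset.sum_eq_single k0]
                  · rw [if_pos ⟨rfl, by omega, by omega⟩, mul_one]
                    congr 1
                    · refine Fin.ext ?_
                      show Snat n p ((β : ℕ) + 1) - 1 - k0 = (a : ℕ)
                      omega
                    · refine Fin.ext ?_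
                      show Snat n p ((i' : ℕ) + 1) - 1 = (b : ℕ)
                      omega
                  · intro k hk hkne
                    rw [if_neg, mul_zero]
                    rintro ⟨-, h2, h3⟩
                    exact hkne (by omega)
                  · intro hnot
                    exact absurd hk0mem hnot
                · intro j' _ hj'ne
                  apply Finset.sum_eq_zero
                  intro k hk
                  rw [if_neg, mul_zero]
                  rintro ⟨-, h2, h3⟩
                  have hpj' := hpos j'
                  have hstepj' := hstep j'
                  have hSj' := hSle j'
                  have hblkj' : blkN n p ↑a = ↑j' := blk_eq (by omega) (by omega) (by omega)
                  exact hj'ne (Fin.ext (by omega))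
                · intro hnot
                  exact absurd (Finset.mem_univ β) hnot
              · intro i'' _ hi''ne
                apply Finset.sum_eq_zero
                intro j' _
                apply Finset.sum_eq_zero
                intro k hk
                rw [if_neg, mul_zero]
                rintro ⟨h1, -, -⟩
                exact hi''ne h1.symm
              · intro hnot
                exact absurd (Finset.mem_univ i') hnot
            rw [hFval, sub_self]
          · push_neg at hq
            have hzab : z a b = 0 := col_ker hpos hNS z hz' i' b hb a (by omega)
            have hFval : F a b = 0 := by
              rw [hFab]
              apply Finset.sum_eq_zero
              intro i'' _
              apply Finset.sum_eq_zero
              intro j' _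
              apply Finset.sum_eq_zero
              intro k hk
              rw [Finset.mem_Icc] at hk
              rw [if_neg, mul_zero]
              rintro ⟨h1, h2, h3⟩
              subst h1
              have hpj' := hpos j'
              have hstepj' := hstep j'
              have hSj' := hSle j'
              have hblkj' : blkN n p ↑a = ↑j' := blk_eq (by omega) (by omega) (by omega)
              have hSeq : Snat n p (blkN n p ↑a) = Snat n p ↑j' := by rw [hblkj']
              omega
            rw [hzab, hFval, sub_self]
        have hzF : z = F := sub_eq_zero.mp hdet
        exact hzF ▸ hFmem
end

section
/- Suppose the grading (g_j)_{j∈ℤ} of M_N(ℂ) is good for the nilpotent matrix e ∈ g₂. Then for every j ≤ −1 the linear map ad e : g_j → g_{j+2}, x ↦ ex − xe, is injective, and for every j ≥ −1 it is surjective. -/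
namespace Submodule

variable {K M P : Type*} [Field K] [AddCommGroup M] [Module K M] [AddCommGroup P] [Module K P]

theorem finrank_le_finrank_of_separating (B : M →ₗ[K] P →ₗ[K] K) {V : Submodule K M}
    {U : Submodule K P} [FiniteDimensional K U]
    (hV : ∀ v ∈ V, (∀ u ∈ U, B v u = 0) → v = 0) :
    Module.finrank K V ≤ Module.finrank K U := by
  let φ : V →ₗ[K] Module.Dual K U := U.subtype.dualMap ∘ₗ B ∘ₗ V.subtype
  have hφ : Function.Injective φ := by
    rw [← LinearMap.ker_eq_bot, eq_bot_iff]
    rintro ⟨v, hv⟩ hφv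
    have hvU (u : P) (hu : u ∈ U) : B v u = 0 := LinearMap.congr_fun hφv ⟨u, hu⟩
    simpa using hV v hv hvU
  simpa only [Subspace.dual_finrank_eq] using LinearMap.finrank_le_finrank_of_injective hφ

theorem eq_of_le_of_separating [FiniteDimensional K M] [FiniteDimensional K P]
    (B : M →ₗ[K] P →ₗ[K] K) {W V : Submodule K M} {U : Submodule K P} (hWV : W ≤ V)
    (hV : ∀ v ∈ V, (∀ u ∈ U, B v u = 0) → v = 0)
    (hU : ∀ u ∈ U, (∀ w ∈ W, B w u = 0) → u = 0) : W = V :=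
  eq_of_le_of_finrank_le hWV <|
    (finrank_le_finrank_of_separating B hV).trans (finrank_le_finrank_of_separating B.flip hU)

end Submodule

namespace Matrix

variable {n R : Type*} [Fintype n] [CommRing R]

theorem eq_zero_of_forall_trace_mul_eq_zero {x : Matrix n n R}
    (hx : ∀ z : Matrix n n R, (x * z).trace = 0) : x = 0 := by
  classical
  ext i j
  simpa [trace_mul_single] using hx (single j i 1)

theorem trace_commutator_mul (e u y : Matrix n n R) :
    ((e * u - u * e) * y).trace = -((e * y - y * e) * u).trace := by
  simp only [sub_mul, trace_sub, neg_sub]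
  rw [trace_mul_cycle e u y, trace_mul_cycle e y u]

end Matrix

section adGrading

variable {N : ℕ} {h : Matrix (Fin N) (Fin N) ℂ}

theorem mem_adGrading_iff {x : Matrix (Fin N) (Fin N) ℂ} {j : ℤ} :
    x ∈ adGrading h j ↔ h * x - x * h = (j : ℂ) • x := Iff.rfl

theorem mul_mem_adGrading_s6 {x y : Matrix (Fin N) (Fin N) ℂ} {j k : ℤ} (hx : x ∈ adGrading h j)
    (hy : y ∈ adGrading h k) : x * y ∈ adGrading h (j + k) := by
  rw [mem_adGrading_iff] at hx hy ⊢
  calc h * (x * y) - x * y * h = (h * x - x * h) * y + x * (h * y - y * h) := by noncomm_ring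
    _ = ((j + k : ℤ) : ℂ) • (x * y) := by
      rw [hx, hy, smul_mul_assoc, mul_smul_comm, Int.cast_add, add_smul]

theorem commutator_mem_adGrading {e x : Matrix (Fin N) (Fin N) ℂ} {j k : ℤ}
    (he : e ∈ adGrading h k) (hx : x ∈ adGrading h j) : e * x - x * e ∈ adGrading h (j + k) :=
  sub_mem (add_comm k j ▸ mul_mem_adGrading_s6 he hx) (mul_mem_adGrading_s6 hx he)

theorem trace_eq_zero_of_mem_adGrading {x : Matrix (Fin N) (Fin N) ℂ} {j : ℤ} (hj : j ≠ 0)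
    (hx : x ∈ adGrading h j) : x.trace = 0 := by
  have : (j : ℂ) * x.trace = 0 := by
    rw [← smul_eq_mul, ← Matrix.trace_smul, ← mem_adGrading_iff.mp hx, Matrix.trace_sub,
      Matrix.trace_mul_comm, sub_self]
  simpa [hj] using this

theorem eq_zero_of_forall_trace_mul_adGrading (hinternal : DirectSum.IsInternal (adGrading h))
    {x : Matrix (Fin N) (Fin N) ℂ} {j k : ℤ} (hjk : j + k = 0) (hx : x ∈ adGrading h j)
    (hxk : ∀ y ∈ adGrading h k, (x * y).trace = 0) : x = 0 := by
  refine Matrix.eq_zero_of_forall_trace_mul_eq_zero fun z => ?_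
  have hz : z ∈ ⨆ i, adGrading h i := by
    rw [hinternal.submodule_iSup_eq_top]
    exact Submodule.mem_top
  induction hz using Submodule.iSup_induction' with
  | mem i y hy =>
    rcases eq_or_ne i k with rfl | hik
    · exact hxk y hy
    · exact trace_eq_zero_of_mem_adGrading (by omega) (mul_mem_adGrading_s6 hx hy)
  | zero => simp
  | add y z _ _ hy hz => rw [mul_add, Matrix.trace_add, hy, hz, add_zero]

theorem eq_zero_of_mem_adGrading_of_mem_iSup_nonneg
    (hinternal : DirectSum.IsInternal (adGrading h)) {x : Matrix (Fin N) (Fin N) ℂ} {j : ℤ}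
    (hj : j < 0) (hx : x ∈ adGrading h j) (hx' : x ∈ ⨆ k ≥ (0 : ℤ), adGrading h k) : x = 0 :=
  Submodule.disjoint_def.mp
    (hinternal.submodule_iSupIndep.disjoint_biSup (y := {k | 0 ≤ k}) (not_le.mpr hj)) x hx hx'

end adGrading

theorem stmt6_general {N : ℕ} (h e : Matrix (Fin N) (Fin N) ℂ)
    (hinternal : DirectSum.IsInternal (adGrading h))
    (he : e ∈ adGrading h 2)
    (hgood : ∀ x : Matrix (Fin N) (Fin N) ℂ, x * e = e * x →
      x ∈ ⨆ j ≥ (0 : ℤ), adGrading h j) :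
    (∀ j : ℤ, j ≤ -1 → ∀ x ∈ adGrading h j, e * x - x * e = 0 → x = 0) ∧
    (∀ j : ℤ, -1 ≤ j → ∀ y ∈ adGrading h (j + 2), ∃ x ∈ adGrading h j,
      e * x - x * e = y) := by
  have inj (j : ℤ) (hj : j ≤ -1) (x) (hx : x ∈ adGrading h j) (hex : e * x - x * e = 0) :
      x = 0 :=
    eq_zero_of_mem_adGrading_of_mem_iSup_nonneg hinternal (by omega) hx
      (hgood x (sub_eq_zero.mp hex).symm)
  refine ⟨inj, fun j hj y hy => ?_⟩
  let adE := LinearMap.mulLeft ℂ e - LinearMap.mulRight ℂ e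
  let traceForm := (LinearMap.mul ℂ (Matrix (Fin N) (Fin N) ℂ)).compr₂
    (Matrix.traceLinearMap (Fin N) ℂ ℂ)
  have himage : (adGrading h j).map adE = adGrading h (j + 2) := by
    refine Submodule.eq_of_le_of_separating traceForm (U := adGrading h (-(j + 2))) ?_
      (fun v hv => eq_zero_of_forall_trace_mul_adGrading hinternal (by ring) hv) ?_
    · rintro _ ⟨x, hx, rfl⟩
      exact commutator_mem_adGrading he hx
    · intro u hu hWu
      refine inj _ (by omega) u hu <|
        eq_zero_of_forall_trace_mul_adGrading hinternal (k := j) (by ring)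
          (commutator_mem_adGrading he hu) fun x hx => ?_
      rw [Matrix.trace_commutator_mul, neg_eq_zero]
      exact hWu _ ⟨x, hx, rfl⟩
  obtain ⟨x, hx, rfl⟩ := himage ▸ hy
  exact ⟨x, hx, rfl⟩

/-- Suppose the grading `(g_j)` of `M_N(ℂ)` is good for the nilpotent
matrix `e ∈ g₂`.  Then for every `j ≤ −1` the map `ad e : g_j → g_{j+2}`, `x ↦ ex − xe`,
is injective, and for every `j ≥ −1` it is surjective. -/
theorem stmt6 {N : ℕ} (h e : Matrix (Fin N) (Fin N) ℂ)
    (hinternal : DirectSum.IsInternal (adGrading h))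
    (hnil : IsNilpotent e)
    (he : e ∈ adGrading h 2)
    (hgood : ∀ x : Matrix (Fin N) (Fin N) ℂ, x * e = e * x →
      x ∈ ⨆ j ≥ (0 : ℤ), adGrading h j) :
    (∀ j : ℤ, j ≤ -1 → ∀ x ∈ adGrading h j, e * x - x * e = 0 → x = 0) ∧
    (∀ j : ℤ, -1 ≤ j → ∀ y ∈ adGrading h (j + 2), ∃ x ∈ adGrading h j,
      e * x - x * e = y) :=
  stmt6_general h e hinternal he hgood
end

section
/- Define linear operators on M_N(ℂ) by A(x) = ex + xe, H(x) = hx − xh, and B(x) = fx + xf. Then {A, H, B} is an sl(2)-triple in End_ℂ(M_N(ℂ)): H∘A − A∘H = 2A, H∘B − B∘H = −2B, and A∘B − B∘A = H. -/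
/-- Let `e, h, f ∈ M_N(ℂ)` be an `sl(2)`-triple and define operators on
`M_N(ℂ)` by `A(x) = ex + xe`, `H(x) = hx − xh`, `B(x) = fx + xf`.  Then `{A, H, B}` is an
`sl(2)`-triple in `End_ℂ(M_N(ℂ))`: `H∘A − A∘H = 2A`, `H∘B − B∘H = −2B`, `A∘B − B∘A = H`. -/
theorem stmt9 {N : ℕ} (hN : 1 ≤ N) (e h f : Matrix (Fin N) (Fin N) ℂ)
    (sl1 : h * e - e * h = (2 : ℂ) • e)
    (sl2 : h * f - f * h = (-2 : ℂ) • f)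
    (sl3 : e * f - f * e = h) :
    (LinearMap.mulLeft ℂ h - LinearMap.mulRight ℂ h) ∘ₗ
        (LinearMap.mulLeft ℂ e + LinearMap.mulRight ℂ e) -
      (LinearMap.mulLeft ℂ e + LinearMap.mulRight ℂ e) ∘ₗ
        (LinearMap.mulLeft ℂ h - LinearMap.mulRight ℂ h) =
      (2 : ℂ) • (LinearMap.mulLeft ℂ e + LinearMap.mulRight ℂ e) ∧
    (LinearMap.mulLeft ℂ h - LinearMap.mulRight ℂ h) ∘ₗ
        (LinearMap.mulLeft ℂ f + LinearMap.mulRight ℂ f) -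
      (LinearMap.mulLeft ℂ f + LinearMap.mulRight ℂ f) ∘ₗ
        (LinearMap.mulLeft ℂ h - LinearMap.mulRight ℂ h) =
      (-2 : ℂ) • (LinearMap.mulLeft ℂ f + LinearMap.mulRight ℂ f) ∧
    (LinearMap.mulLeft ℂ e + LinearMap.mulRight ℂ e) ∘ₗ
        (LinearMap.mulLeft ℂ f + LinearMap.mulRight ℂ f) -
      (LinearMap.mulLeft ℂ f + LinearMap.mulRight ℂ f) ∘ₗ
        (LinearMap.mulLeft ℂ e + LinearMap.mulRight ℂ e) =
      (LinearMap.mulLeft ℂ h - LinearMap.mulRight ℂ h) := by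
  refine ⟨?_, ?_, ?_⟩ <;> refine LinearMap.ext fun x => ?_ <;>
    simp only [LinearMap.comp_apply, LinearMap.sub_apply, LinearMap.add_apply,
      LinearMap.smul_apply, LinearMap.mulLeft_apply, LinearMap.mulRight_apply]
  · calc h * (e * x + x * e) - ((e * x + x * e) * h) -
          (e * (h * x - x * h) + (h * x - x * h) * e)
        = (h * e - e * h) * x + x * (h * e - e * h) := by noncomm_ring
      _ = (2 : ℂ) • (e * x + x * e) := by
          rw [sl1, smul_mul_assoc, mul_smul_comm, smul_add]
  · calc h * (f * x + x * f) - ((f * x + x * f) * h) -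
          (f * (h * x - x * h) + (h * x - x * h) * f)
        = (h * f - f * h) * x + x * (h * f - f * h) := by noncomm_ring
      _ = (-2 : ℂ) • (f * x + x * f) := by
          rw [sl2, smul_mul_assoc, mul_smul_comm, smul_add]
  · calc e * (f * x + x * f) + (f * x + x * f) * e -
          (f * (e * x + x * e) + (e * x + x * e) * f)
        = (e * f - f * e) * x - x * (e * f - f * e) := by noncomm_ring
      _ = h * x - x * h := by rw [sl3]
end

section
/- The image of the operator x ↦ ex + xe on M_N(ℂ) intersects the kernel of the operator y ↦ fy + yf trivially: {ex + xe : x ∈ M_N(ℂ)} ∩ {y ∈ M_N(ℂ) : fy + yf = 0} = {0}. -/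
/-- Abstract key lemma: for an `sl2`-triple of endomorphisms of a finite-dimensional
complex vector space, the range of `E` meets the kernel of `F` trivially. -/
theorem sl2_key {V : Type*} [AddCommGroup V] [Module ℂ V] [FiniteDimensional ℂ V]
    (E H F : Module.End ℂ V)
    (hHE : H * E - E * H = (2:ℂ) • E)
    (hHF : H * F - F * H = (-2:ℂ) • F)
    (hEF : E * F - F * E = H) :
    ∀ x : V, F (E x) = 0 → E x = 0 := by
  classical
  -- pointwise commutation relations
  have aE : ∀ v : V, H (E v) = E (H v) + (2:ℂ) • E v := by
    intro v
    have h1 := LinearMap.congr_fun hHE v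
    simp only [LinearMap.sub_apply, Module.End.mul_apply, LinearMap.smul_apply] at h1
    linear_combination (norm := module) h1
  have aF : ∀ v : V, H (F v) = F (H v) - (2:ℂ) • F v := by
    intro v
    have h1 := LinearMap.congr_fun hHF v
    simp only [LinearMap.sub_apply, Module.End.mul_apply, LinearMap.smul_apply] at h1
    linear_combination (norm := module) h1
  have aEF : ∀ v : V, E (F v) = F (E v) + H v := by
    intro v
    have h1 := LinearMap.congr_fun hEF v
    simp only [LinearMap.sub_apply, Module.End.mul_apply] at h1
    linear_combination (norm := module) h1
  -- commutation with powers of (H - μ)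
  have commE : ∀ (μ : ℂ) (k : ℕ), (H - (μ+2) • 1)^k * E = E * (H - μ • 1)^k := by
    intro μ k
    have base : (H - (μ+2) • 1) * E = E * (H - μ • 1) := by
      ext v
      simp only [Module.End.mul_apply, LinearMap.sub_apply, LinearMap.smul_apply,
        Module.End.one_apply, map_sub, map_smul]
      rw [aE v]; module
    induction k with
    | zero => simp
    | succ n ih => rw [pow_succ, mul_assoc, base, ← mul_assoc, ih, mul_assoc, ← pow_succ]
  have commF : ∀ (μ : ℂ) (k : ℕ), (H - (μ-2) • 1)^k * F = F * (H - μ • 1)^k := by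
    intro μ k
    have base : (H - (μ-2) • 1) * F = F * (H - μ • 1) := by
      ext v
      simp only [Module.End.mul_apply, LinearMap.sub_apply, LinearMap.smul_apply,
        Module.End.one_apply, map_sub, map_smul]
      rw [aF v]; module
    induction k with
    | zero => simp
    | succ n ih => rw [pow_succ, mul_assoc, base, ← mul_assoc, ih, mul_assoc, ← pow_succ]
  -- generalized eigenspace mapping
  have mapE : ∀ (μ : ℂ) (v : V), v ∈ H.maxGenEigenspace μ →
      E v ∈ H.maxGenEigenspace (μ + 2) := by
    intro μ v hv
    rw [Module.End.mem_maxGenEigenspace] at hv ⊢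
    obtain ⟨k, hk⟩ := hv
    exact ⟨k, by rw [← Module.End.mul_apply, commE μ k, Module.End.mul_apply, hk, map_zero]⟩
  have mapF : ∀ (μ : ℂ) (v : V), v ∈ H.maxGenEigenspace μ →
      F v ∈ H.maxGenEigenspace (μ - 2) := by
    intro μ v hv
    rw [Module.End.mem_maxGenEigenspace] at hv ⊢
    obtain ⟨k, hk⟩ := hv
    exact ⟨k, by rw [← Module.End.mul_apply, commF μ k, Module.End.mul_apply, hk, map_zero]⟩
  have mapEpow : ∀ (k : ℕ) (μ : ℂ) (v : V), v ∈ H.maxGenEigenspace μ →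
      (E^k) v ∈ H.maxGenEigenspace (μ + 2*k) := by
    intro k
    induction k with
    | zero => intro μ v hv; simpa using hv
    | succ n ih =>
      intro μ v hv
      have h1 : (E^(n+1)) v = E ((E^n) v) := by rw [pow_succ', Module.End.mul_apply]
      rw [h1]
      have h2 := mapE _ _ (ih μ v hv)
      have h3 : μ + 2*(n:ℂ) + 2 = μ + 2*((n:ℕ)+1 : ℕ) := by push_cast; ring
      rwa [h3] at h2
  have mapFpow : ∀ (k : ℕ) (μ : ℂ) (v : V), v ∈ H.maxGenEigenspace μ →
      (F^k) v ∈ H.maxGenEigenspace (μ - 2*k) := by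
    intro k
    induction k with
    | zero => intro μ v hv; simpa using hv
    | succ n ih =>
      intro μ v hv
      have h1 : (F^(n+1)) v = F ((F^n) v) := by rw [pow_succ', Module.End.mul_apply]
      rw [h1]
      have h2 := mapF _ _ (ih μ v hv)
      have h3 : μ - 2*(n:ℂ) - 2 = μ - 2*((n:ℕ)+1 : ℕ) := by push_cast; ring
      rwa [h3] at h2
  -- nonzero generalized eigenvector gives eigenvalue
  have eig : ∀ (μ : ℂ) (v : V), v ∈ H.maxGenEigenspace μ → v ≠ 0 → H.HasEigenvalue μ := by
    intro μ v hv hv0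
    rw [Module.End.mem_maxGenEigenspace] at hv
    obtain ⟨k, hk⟩ := hv
    refine Module.End.hasEigenvalue_of_hasGenEigenvalue (k := k) ?_
    refine Submodule.ne_bot_iff _ |>.mpr ⟨v, ?_, hv0⟩
    exact Module.End.mem_genEigenspace_nat.mpr hk
  -- termination of chains
  have term : ∀ (c : ℕ → ℂ), Function.Injective c → ∀ (T : Module.End ℂ V) (v : V),
      (∀ k : ℕ, (T^k) v ∈ H.maxGenEigenspace (c k)) → ∃ k, (T^k) v = 0 := by
    intro c hc T v hmem
    by_contra hcon
    push_neg at hcon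
    have hinf : Set.Infinite {μ | H.HasEigenvalue μ} :=
      Set.infinite_of_injective_forall_mem hc (fun k => eig _ _ (hmem k) (hcon k))
    exact H.finite_hasEigenvalue.not_infinite hinf
  -- commutation with powers of E and F
  have CHE : ∀ (k : ℕ) (v : V), H ((E^k) v) = (E^k) (H v) + (2*(k:ℂ)) • (E^k) v := by
    intro k
    induction k with
    | zero => intro v; simp
    | succ n ih =>
      intro v
      have c2 : ∀ w : V, (E^n) (E w) = (E^(n+1)) w := fun w => by
        rw [pow_succ, Module.End.mul_apply]
      rw [show (E^(n+1)) v = (E^n) (E v) from (c2 v).symm, ih (E v), aE v]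
      simp only [map_add, map_smul, c2]
      push_cast
      module
  have CHF : ∀ (k : ℕ) (v : V), H ((F^k) v) = (F^k) (H v) - (2*(k:ℂ)) • (F^k) v := by
    intro k
    induction k with
    | zero => intro v; simp
    | succ n ih =>
      intro v
      have c2 : ∀ w : V, (F^n) (F w) = (F^(n+1)) w := fun w => by
        rw [pow_succ, Module.End.mul_apply]
      rw [show (F^(n+1)) v = (F^n) (F v) from (c2 v).symm, ih (F v), aF v]
      simp only [map_add, map_sub, map_smul, c2]
      push_cast
      module
  -- the two string identities
  have P : ∀ (k : ℕ) (v : V), E ((F^(k+1)) v) =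
      (F^(k+1)) (E v) + ((k:ℂ)+1) • (F^k) (H v) - (((k:ℂ)+1)*(k:ℂ)) • (F^k) v := by
    intro k
    induction k with
    | zero =>
      intro v
      simp only [zero_add, pow_one, pow_zero, Module.End.one_apply, Nat.cast_zero]
      rw [aEF v]; module
    | succ n ih =>
      intro v
      have c1 : ∀ w : V, (F^(n+1)) (F w) = (F^(n+1+1)) w := fun w => by
        conv_rhs => rw [pow_succ]
        rfl
      have c2 : ∀ w : V, (F^n) (F w) = (F^(n+1)) w := fun w => by
        rw [pow_succ, Module.End.mul_apply]
      rw [show (F^(n+1+1)) v = (F^(n+1)) (F v) from (c1 v).symm, ih (F v), aEF v, aF v]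
      simp only [map_add, map_sub, map_smul, c1, c2]
      push_cast
      module
  have Q : ∀ (k : ℕ) (v : V), F ((E^(k+1)) v) =
      (E^(k+1)) (F v) - ((k:ℂ)+1) • (E^k) (H v) - (((k:ℂ)+1)*(k:ℂ)) • (E^k) v := by
    intro k
    induction k with
    | zero =>
      intro v
      simp only [zero_add, pow_one, pow_zero, Module.End.one_apply, Nat.cast_zero]
      have := aEF v
      linear_combination (norm := module) -this
    | succ n ih =>
      intro v
      have c1 : ∀ w : V, (E^(n+1)) (E w) = (E^(n+1+1)) w := fun w => by
        conv_rhs => rw [pow_succ]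
        rfl
      have c2 : ∀ w : V, (E^n) (E w) = (E^(n+1)) w := fun w => by
        rw [pow_succ, Module.End.mul_apply]
      have hFE : F (E v) = E (F v) - H v := by
        have := aEF v; linear_combination (norm := module) -this
      rw [show (E^(n+1+1)) v = (E^(n+1)) (E v) from (c1 v).symm, ih (E v), hFE, aE v]
      simp only [map_add, map_sub, map_smul, c1, c2]
      push_cast
      module
  -- Claim A: a nonzero lowest-weight-type vector has weight `-p`
  have claimA : ∀ (lam : ℂ) (y : V), y ∈ H.maxGenEigenspace lam → y ≠ 0 → F y = 0 →
      ∃ p : ℕ, lam = -(p:ℂ) := by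
    intro lam y hy hy0 hFy
    have hchain : ∀ k : ℕ, (E^k) y ∈ H.maxGenEigenspace (lam + 2*k) :=
      fun k => mapEpow k lam y hy
    have hinj : Function.Injective (fun k : ℕ => lam + 2*(k:ℂ)) := by
      intro a b hab
      simp only at hab
      have : (a:ℂ) = b := by linear_combination hab/2
      exact_mod_cast this
    have hex : ∃ k, (E^k) y = 0 := term _ hinj E y hchain
    have hfind0 : Nat.find hex ≠ 0 := by
      intro hh
      have hsp := Nat.find_spec hex
      rw [hh] at hsp
      exact hy0 (by simpa using hsp)
    obtain ⟨p, hp⟩ : ∃ p, Nat.find hex = p + 1 := ⟨Nat.find hex - 1, by omega⟩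
    have h1 : (E^(p+1)) y = 0 := by rw [← hp]; exact Nat.find_spec hex
    have h2 : (E^p) y ≠ 0 := Nat.find_min hex (by omega)
    have hQ := Q p y
    rw [h1, hFy, map_zero, map_zero] at hQ
    have h4 : ((p:ℂ)+1) • ((E^p) (H y)) = ((p:ℂ)+1) • ((-(p:ℂ)) • (E^p) y) := by
      linear_combination (norm := module) hQ
    have h5 : (E^p) (H y) = (-(p:ℂ)) • (E^p) y :=
      smul_right_injective V (Nat.cast_add_one_ne_zero p) h4
    have hu : H ((E^p) y) = (p:ℂ) • (E^p) y := by
      rw [CHE p y, h5]; module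
    have hu1 : (E^p) y ∈ H.maxGenEigenspace ((p:ℂ)) := by
      rw [Module.End.mem_maxGenEigenspace]
      refine ⟨1, ?_⟩
      rw [pow_one, LinearMap.sub_apply, LinearMap.smul_apply, Module.End.one_apply, hu, sub_self]
    have hu2 := hchain p
    by_cases hc : lam + 2*(p:ℂ) = (p:ℂ)
    · exact ⟨p, by linear_combination hc⟩
    · exfalso
      have hdis := (Module.End.independent_maxGenEigenspace H).pairwiseDisjoint hc
      exact h2 (Submodule.disjoint_def.mp hdis _ hu2 hu1)
  -- Claim B: if `F (E x) = 0` and `x ≠ 0` lives in a generalized eigenspace, weight is `n ∈ ℕ`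
  have claimB : ∀ (μ : ℂ) (x : V), x ∈ H.maxGenEigenspace μ → x ≠ 0 → F (E x) = 0 →
      ∃ n : ℕ, μ = (n:ℂ) := by
    intro μ x hx hx0 hFEx
    have hchain : ∀ k : ℕ, (F^k) x ∈ H.maxGenEigenspace (μ - 2*k) :=
      fun k => mapFpow k μ x hx
    have hinj : Function.Injective (fun k : ℕ => μ - 2*(k:ℂ)) := by
      intro a b hab
      simp only at hab
      have : (a:ℂ) = b := by linear_combination -hab/2
      exact_mod_cast this
    have hex : ∃ k, (F^k) x = 0 := term _ hinj F x hchain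
    have hfind0 : Nat.find hex ≠ 0 := by
      intro hh
      have hsp := Nat.find_spec hex
      rw [hh] at hsp
      exact hx0 (by simpa using hsp)
    obtain ⟨n, hn⟩ : ∃ n, Nat.find hex = n + 1 := ⟨Nat.find hex - 1, by omega⟩
    have h1 : (F^(n+1)) x = 0 := by rw [← hn]; exact Nat.find_spec hex
    have h2 : (F^n) x ≠ 0 := Nat.find_min hex (by omega)
    have h3 : (F^(n+1)) (E x) = 0 := by
      rw [pow_succ, Module.End.mul_apply, hFEx, map_zero]
    have hP := P n x
    rw [h1, h3, map_zero] at hP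
    have h4 : ((n:ℂ)+1) • ((F^n) (H x)) = ((n:ℂ)+1) • (((n:ℂ)) • (F^n) x) := by
      linear_combination (norm := module) -hP
    have h5 : (F^n) (H x) = ((n:ℂ)) • (F^n) x :=
      smul_right_injective V (Nat.cast_add_one_ne_zero n) h4
    have hw : H ((F^n) x) = (-(n:ℂ)) • (F^n) x := by
      rw [CHF n x, h5]; module
    have hw1 : (F^n) x ∈ H.maxGenEigenspace (-(n:ℂ)) := by
      rw [Module.End.mem_maxGenEigenspace]
      refine ⟨1, ?_⟩
      rw [pow_one, LinearMap.sub_apply, LinearMap.smul_apply, Module.End.one_apply, hw, sub_self]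
    have hw2 := hchain n
    by_cases hc : μ - 2*(n:ℂ) = -(n:ℂ)
    · exact ⟨n, by linear_combination hc⟩
    · exfalso
      have hdis := (Module.End.independent_maxGenEigenspace H).pairwiseDisjoint hc
      exact h2 (Submodule.disjoint_def.mp hdis _ hw2 hw1)
  -- single-weight conclusion
  have SW : ∀ (μ : ℂ) (v : V), v ∈ H.maxGenEigenspace μ → F (E v) = 0 → E v = 0 := by
    intro μ v hv hFv
    by_contra hne
    have hv0 : v ≠ 0 := fun hh => hne (by rw [hh, map_zero])
    obtain ⟨n, rfl⟩ := claimB μ v hv hv0 hFv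
    have hEv : E v ∈ H.maxGenEigenspace ((n:ℂ) + 2) := mapE _ v hv
    obtain ⟨p, hp⟩ := claimA _ (E v) hEv hne hFv
    have hcast : ((n + p + 2 : ℕ) : ℂ) = 0 := by push_cast; linear_combination hp
    have : n + p + 2 = 0 := by exact_mod_cast hcast
    omega
  -- unique representation of zero over independent family
  have zero_rep : ∀ (s : Finset ℂ) (c : ℂ → V), (∀ ν ∈ s, c ν ∈ H.maxGenEigenspace ν) →
      ∑ ν ∈ s, c ν = 0 → ∀ ν ∈ s, c ν = 0 := by
    intro s
    induction s using Finset.induction_on with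
    | empty => intro c _ _ ν hν; exact absurd hν (Finset.notMem_empty ν)
    | @insert a s ha ih =>
      intro c hc hsum
      rw [Finset.sum_insert ha] at hsum
      have hmem_sup : ∑ ν ∈ s, c ν ∈ ⨆ ν ∈ {ν' : ℂ | ν' ≠ a}, H.maxGenEigenspace ν := by
        refine Submodule.sum_mem _ (fun ν hν => ?_)
        exact Submodule.mem_iSup_of_mem ν (Submodule.mem_iSup_of_mem
          (fun hh => ha (hh ▸ hν)) (hc ν (Finset.mem_insert_of_mem hν)))
      have hdis := (Module.End.independent_maxGenEigenspace H).disjoint_biSup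
        (show a ∉ {ν' : ℂ | ν' ≠ a} from by simp)
      have hca : c a = 0 := by
        refine Submodule.disjoint_def.mp hdis (c a) (hc a (Finset.mem_insert_self a s)) ?_
        rw [eq_neg_of_add_eq_zero_left hsum]
        exact Submodule.neg_mem _ hmem_sup
      have hsum' : ∑ ν ∈ s, c ν = 0 := by rw [hca, zero_add] at hsum; exact hsum
      intro ν hν
      rcases Finset.mem_insert.mp hν with rfl | hν'
      · exact hca
      · exact ih c (fun ξ hξ => hc ξ (Finset.mem_insert_of_mem hξ)) hsum' ν hν'
  -- assemble
  intro x hx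
  have hdecomp : x ∈ ⨆ μ, H.maxGenEigenspace μ := by
    rw [Module.End.iSup_maxGenEigenspace_eq_top]; exact Submodule.mem_top
  obtain ⟨g, hg, hgsum⟩ := (Submodule.mem_iSup_iff_exists_finsupp _ x).mp hdecomp
  have hgsum' : ∑ μ ∈ g.support, g μ = x := hgsum
  have hcomp : ∀ μ : ℂ, F (E (g μ)) ∈ H.maxGenEigenspace μ := by
    intro μ
    have h2 := mapF (μ+2) (E (g μ)) (mapE μ (g μ) (hg μ))
    simpa using h2
  have hsum0 : ∑ μ ∈ g.support, F (E (g μ)) = 0 := by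
    rw [← map_sum, ← map_sum, hgsum', hx]
  have hzero := zero_rep g.support (fun μ => F (E (g μ))) (fun ν _ => hcomp ν) hsum0
  have hEg : ∀ μ : ℂ, E (g μ) = 0 := by
    intro μ
    by_cases hμ : μ ∈ g.support
    · exact SW μ (g μ) (hg μ) (hzero μ hμ)
    · rw [Finsupp.notMem_support_iff.mp hμ, map_zero]
  rw [← hgsum', map_sum]
  exact Finset.sum_eq_zero (fun μ _ => hEg μ)

/-- Let `e, h, f ∈ M_N(ℂ)` be an `sl(2)`-triple.  The image of the
operator `x ↦ ex + xe` intersects the kernel of `y ↦ fy + yf` trivially: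
`{ex + xe : x ∈ M_N(ℂ)} ∩ {y : fy + yf = 0} = {0}`. -/
theorem stmt10 {N : ℕ} (hN : 1 ≤ N) (e h f : Matrix (Fin N) (Fin N) ℂ)
    (sl1 : h * e - e * h = (2 : ℂ) • e)
    (sl2 : h * f - f * h = (-2 : ℂ) • f)
    (sl3 : e * f - f * e = h) :
    {y : Matrix (Fin N) (Fin N) ℂ | ∃ x, y = e * x + x * e} ∩
      {y : Matrix (Fin N) (Fin N) ℂ | f * y + y * f = 0} = {0} := by
  have k1 : h * e = e * h + (2:ℂ) • e := by rw [← sl1]; module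
  have k2 : h * f = f * h + (-2:ℂ) • f := by rw [← sl2]; module
  have k3 : e * f = f * e + h := by rw [← sl3]; module
  have fL : ∀ a b : Matrix (Fin N) (Fin N) ℂ, LinearMap.mulLeft ℂ a * LinearMap.mulLeft ℂ b
      = LinearMap.mulLeft ℂ (a * b) := fun a b => by
    apply LinearMap.ext; intro x
    simp [Module.End.mul_apply, mul_assoc]
  have fR : ∀ a b : Matrix (Fin N) (Fin N) ℂ, LinearMap.mulRight ℂ a * LinearMap.mulRight ℂ b
      = LinearMap.mulRight ℂ (b * a) := fun a b => by
    apply LinearMap.ext; intro x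
    simp [Module.End.mul_apply, mul_assoc]
  have fC : ∀ a b : Matrix (Fin N) (Fin N) ℂ, LinearMap.mulRight ℂ b * LinearMap.mulLeft ℂ a
      = LinearMap.mulLeft ℂ a * LinearMap.mulRight ℂ b := fun a b => by
    apply LinearMap.ext; intro x
    simp [Module.End.mul_apply, mul_assoc]
  have fLadd : ∀ a b : Matrix (Fin N) (Fin N) ℂ, LinearMap.mulLeft ℂ (a + b)
      = LinearMap.mulLeft ℂ a + LinearMap.mulLeft ℂ b := fun a b => by
    apply LinearMap.ext; intro x
    simp [add_mul]
  have fRadd : ∀ a b : Matrix (Fin N) (Fin N) ℂ, LinearMap.mulRight ℂ (a + b)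
      = LinearMap.mulRight ℂ a + LinearMap.mulRight ℂ b := fun a b => by
    apply LinearMap.ext; intro x
    simp [mul_add]
  have fLsmul : ∀ (c : ℂ) (a : Matrix (Fin N) (Fin N) ℂ), LinearMap.mulLeft ℂ (c • a)
      = c • LinearMap.mulLeft ℂ a := fun c a => by
    apply LinearMap.ext; intro x
    simp [smul_mul_assoc]
  have fRsmul : ∀ (c : ℂ) (a : Matrix (Fin N) (Fin N) ℂ), LinearMap.mulRight ℂ (c • a)
      = c • LinearMap.mulRight ℂ a := fun c a => by
    apply LinearMap.ext; intro x
    simp [mul_smul_comm]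
  have rel1 : (LinearMap.mulLeft ℂ h - LinearMap.mulRight ℂ h) *
        (LinearMap.mulLeft ℂ e + LinearMap.mulRight ℂ e) -
      (LinearMap.mulLeft ℂ e + LinearMap.mulRight ℂ e) *
        (LinearMap.mulLeft ℂ h - LinearMap.mulRight ℂ h) =
      (2:ℂ) • (LinearMap.mulLeft ℂ e + LinearMap.mulRight ℂ e) := by
    simp only [sub_mul, mul_sub, add_mul, mul_add, fL, fR, fC, k1, fLadd, fLsmul,
      fRadd, fRsmul]
    module
  have rel2 : (LinearMap.mulLeft ℂ h - LinearMap.mulRight ℂ h) *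
        (LinearMap.mulLeft ℂ f + LinearMap.mulRight ℂ f) -
      (LinearMap.mulLeft ℂ f + LinearMap.mulRight ℂ f) *
        (LinearMap.mulLeft ℂ h - LinearMap.mulRight ℂ h) =
      (-2:ℂ) • (LinearMap.mulLeft ℂ f + LinearMap.mulRight ℂ f) := by
    simp only [sub_mul, mul_sub, add_mul, mul_add, fL, fR, fC, k2, fLadd, fLsmul,
      fRadd, fRsmul]
    module
  have rel3 : (LinearMap.mulLeft ℂ e + LinearMap.mulRight ℂ e) *
        (LinearMap.mulLeft ℂ f + LinearMap.mulRight ℂ f) -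
      (LinearMap.mulLeft ℂ f + LinearMap.mulRight ℂ f) *
        (LinearMap.mulLeft ℂ e + LinearMap.mulRight ℂ e) =
      (LinearMap.mulLeft ℂ h - LinearMap.mulRight ℂ h) := by
    simp only [sub_mul, mul_sub, add_mul, mul_add, fL, fR, fC, k3, fLadd, fLsmul,
      fRadd, fRsmul]
    module
  ext y
  simp only [Set.mem_inter_iff, Set.mem_setOf_eq, Set.mem_singleton_iff]
  constructor
  · rintro ⟨⟨x, rfl⟩, hker⟩
    have h0 : (LinearMap.mulLeft ℂ f + LinearMap.mulRight ℂ f)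
        ((LinearMap.mulLeft ℂ e + LinearMap.mulRight ℂ e) x) = 0 := by
      simp only [LinearMap.add_apply, LinearMap.mulLeft_apply, LinearMap.mulRight_apply]
      exact hker
    have hkey := sl2_key (LinearMap.mulLeft ℂ e + LinearMap.mulRight ℂ e)
      (LinearMap.mulLeft ℂ h - LinearMap.mulRight ℂ h)
      (LinearMap.mulLeft ℂ f + LinearMap.mulRight ℂ f) rel1 rel2 rel3 x h0
    simpa only [LinearMap.add_apply, LinearMap.mulLeft_apply,
      LinearMap.mulRight_apply] using hkey
  · rintro rfl
    exact ⟨⟨0, by simp⟩, by simp⟩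
end
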